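/- In the path category EFF, the discrete fibrations form an impredicative class of small fibrations: (1) every isomorphism is a discrete fibration; (2) discrete fibrations are stable under homotopy pullback; (3) discrete fibrations are closed under composition; and (4) discrete fibrations are closed under Π_f for every (not necessarily discrete) fibration f. -/

import Mathlib

namespace EffPaper

/-! ### A small kit for tracking by partial computable functions.

We encode "partial computable function" via Mathlib's `Partrec` on `ℕ →. ℕ`.
`CompComputes I O` says: there is a partial computable function which, on the input
`I x`, converges and outputs `O x` (for every `x` in some index type `X`).
`CompFinds I S` says: there is a partial computable function which, on the input
`I x`, converges and outputs some element of the set `S x`. -/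

def CompComputes {X : Sort*} (I O : X → ℕ) : Prop :=
  ∃ F : ℕ →. ℕ, Partrec F ∧ ∀ x, O x ∈ F (I x)

def CompFinds {X : Sort*} (I : X → ℕ) (S : X → Set ℕ) : Prop :=
  ∃ F : ℕ →. ℕ, Partrec F ∧ ∀ x, ∃ k, k ∈ F (I x) ∧ k ∈ S x

namespace CompComputes

protected theorem id {X : Sort*} (I : X → ℕ) : CompComputes I I :=
  ⟨fun n => Part.some n, Partrec.some, fun x => Part.mem_some _⟩

protected theorem const {X : Sort*} (I : X → ℕ) (c : ℕ) : CompComputes I fun _ => c :=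
  ⟨fun _ => Part.some c, (Computable.const c).partrec, fun _ => Part.mem_some _⟩

protected theorem comp {X : Sort*} {I M O : X → ℕ}
    (h₂ : CompComputes M O) (h₁ : CompComputes I M) : CompComputes I O := by
  obtain ⟨F₁, pF₁, s₁⟩ := h₁
  obtain ⟨F₂, pF₂, s₂⟩ := h₂
  refine ⟨fun n => (F₁ n).bind F₂, pF₁.bind (pF₂.comp Computable.snd), fun x => ?_⟩
  exact Part.mem_bind_iff.mpr ⟨M x, s₁ x, s₂ x⟩

protected theorem pair {X : Sort*} {I a b : X → ℕ}
    (ha : CompComputes I a) (hb : CompComputes I b) :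
    CompComputes I (fun x => Nat.pair (a x) (b x)) := by
  obtain ⟨F₁, pF₁, s₁⟩ := ha
  obtain ⟨F₂, pF₂, s₂⟩ := hb
  refine ⟨fun n => (F₁ n).bind fun u => (F₂ n).map fun v => Nat.pair u v, ?_, fun x => ?_⟩
  · refine pF₁.bind ?_
    have : Computable₂ fun (p : ℕ × ℕ) (v : ℕ) => Nat.pair p.2 v :=
      Primrec₂.to_comp (Primrec₂.natPair.comp (Primrec.snd.comp Primrec.fst) Primrec.snd)
    exact Partrec.map (pF₂.comp Computable.fst) this
  · exact Part.mem_bind_iff.mpr ⟨a x, s₁ x, (Part.mem_map_iff _).mpr ⟨b x, s₂ x, rfl⟩⟩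

protected theorem unpairL {X : Sort*} (I : X → ℕ) :
    CompComputes I (fun x => (I x).unpair.1) :=
  ⟨fun n => Part.some n.unpair.1,
    (Primrec.to_comp (Primrec.fst.comp Primrec.unpair)).partrec, fun _ => Part.mem_some _⟩

protected theorem unpairR {X : Sort*} (I : X → ℕ) :
    CompComputes I (fun x => (I x).unpair.2) :=
  ⟨fun n => Part.some n.unpair.2,
    (Primrec.to_comp (Primrec.snd.comp Primrec.unpair)).partrec, fun _ => Part.mem_some _⟩

protected theorem projL {X : Sort*} (a b : X → ℕ) :
    CompComputes (fun x => Nat.pair (a x) (b x)) a := by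
  have := CompComputes.unpairL (X := X) (fun x => Nat.pair (a x) (b x))
  simpa [Nat.unpair_pair] using this

protected theorem projR {X : Sort*} (a b : X → ℕ) :
    CompComputes (fun x => Nat.pair (a x) (b x)) b := by
  have := CompComputes.unpairR (X := X) (fun x => Nat.pair (a x) (b x))
  simpa [Nat.unpair_pair] using this

protected theorem precomp {X Y : Sort*} {I O : X → ℕ} (h : CompComputes I O) (e : Y → X) :
    CompComputes (fun y => I (e y)) (fun y => O (e y)) := by
  obtain ⟨F, pF, s⟩ := h
  exact ⟨F, pF, fun y => s (e y)⟩

protected theorem toFinds {X : Sort*} {I o : X → ℕ} {S : X → Set ℕ}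
    (h : CompComputes I o) (hm : ∀ x, o x ∈ S x) : CompFinds I S := by
  obtain ⟨F, pF, s⟩ := h
  exact ⟨F, pF, fun x => ⟨o x, s x, hm x⟩⟩

end CompComputes

namespace CompFinds

protected theorem toComputes {X : Sort*} {I : X → ℕ} {S : X → Set ℕ} (h : CompFinds I S) :
    ∃ o : X → ℕ, (∀ x, o x ∈ S x) ∧ CompComputes I o := by
  obtain ⟨F, pF, s⟩ := h
  refine ⟨fun x => (s x).choose, fun x => (s x).choose_spec.2, F, pF, fun x => (s x).choose_spec.1⟩

/-- Reindex a `CompFinds` along `e` and chase the input through a computable function. -/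
protected theorem via {Y X : Sort*} {J : X → ℕ} {S : X → Set ℕ} (h : CompFinds J S)
    {I : Y → ℕ} (e : Y → X) (hc : CompComputes I (fun y => J (e y))) :
    CompFinds I (fun y => S (e y)) := by
  obtain ⟨o, hm, hcc⟩ := h.toComputes
  exact CompComputes.toFinds ((hcc.precomp e).comp hc) (fun y => hm (e y))

end CompFinds

end EffPaper

namespace EffPaper

open CategoryTheory

universe v u

/-! ### Path categories (Van den Berg–Moerdijk style), abstractly.

A `PathStruct` on a category is a pair of classes of maps: fibrations and equivalences.
`IsPathCategory` expresses the seven axioms of a path category. -/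

structure PathStruct (C : Type u) [Category.{v} C] where
  Fib : ∀ ⦃X Y : C⦄, (X ⟶ Y) → Prop
  Eqv : ∀ ⦃X Y : C⦄, (X ⟶ Y) → Prop

section PathCatDefs

variable {C : Type u} [Category.{v} C]

/-- `T` is a terminal object. -/
def IsTerminalObj (T : C) : Prop := ∀ Z : C, ∃ f : Z ⟶ T, ∀ g : Z ⟶ T, g = f

/-- The square with projections `p₁, p₂` is a pullback of the cospan `f, g`. -/
def IsPB {P X Y Z : C} (p₁ : P ⟶ X) (p₂ : P ⟶ Y) (f : X ⟶ Z) (g : Y ⟶ Z) : Prop :=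
  p₁ ≫ f = p₂ ≫ g ∧ ∀ (Q : C) (q₁ : Q ⟶ X) (q₂ : Q ⟶ Y), q₁ ≫ f = q₂ ≫ g →
    ∃! h : Q ⟶ P, h ≫ p₁ = q₁ ∧ h ≫ p₂ = q₂

/-- `p₁, p₂` exhibit their common domain as a binary product of `X` and `Y`. -/
def IsBinProd {P X Y : C} (p₁ : P ⟶ X) (p₂ : P ⟶ Y) : Prop :=
  ∀ (Q : C) (q₁ : Q ⟶ X) (q₂ : Q ⟶ Y), ∃! h : Q ⟶ P, h ≫ p₁ = q₁ ∧ h ≫ p₂ = q₂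

variable (S : PathStruct C)

/-- `X → PX → X × X` is a path object for `X`: the first map is an equivalence, the
second (the pairing of `s` and `t` into a binary product `X × X`) is a fibration,
and the composite is the diagonal. -/
def IsPathObj {X PX : C} (r : X ⟶ PX) (s t : PX ⟶ X) : Prop :=
  S.Eqv r ∧ r ≫ s = 𝟙 X ∧ r ≫ t = 𝟙 X ∧
  ∃ (W : C) (π₁ π₂ : W ⟶ X) (h : PX ⟶ W),
    IsBinProd π₁ π₂ ∧ h ≫ π₁ = s ∧ h ≫ π₂ = t ∧ S.Fib h

/-- A path object for `p : X ⟶ I` in the slice path category `C(I)`: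
a factorisation of the fibrewise diagonal `X ⟶ X ×_I X` as an equivalence `r`
followed by a fibration. -/
def IsRelPathObj {X I PX : C} (p : X ⟶ I) (r : X ⟶ PX) (s t : PX ⟶ X) : Prop :=
  S.Eqv r ∧ r ≫ s = 𝟙 X ∧ r ≫ t = 𝟙 X ∧ s ≫ p = t ≫ p ∧
  ∃ (W : C) (π₁ π₂ : W ⟶ X) (h : PX ⟶ W),
    IsPB π₁ π₂ p p ∧ h ≫ π₁ = s ∧ h ≫ π₂ = t ∧ S.Fib h

/-- The seven axioms for a path category. -/
structure IsPathCategory : Prop where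
  fib_of_iso : ∀ {X Y : C} (f : X ⟶ Y), IsIso f → S.Fib f
  fib_comp : ∀ {X Y Z : C} (f : X ⟶ Y) (g : Y ⟶ Z), S.Fib f → S.Fib g → S.Fib (f ≫ g)
  terminal : ∃ T : C, IsTerminalObj T ∧ ∀ (X : C) (f : X ⟶ T), S.Fib f
  pullback : ∀ {X Y Z : C} (f : X ⟶ Z) (g : Y ⟶ Z), S.Fib f →
    ∃ (P : C) (p₁ : P ⟶ X) (p₂ : P ⟶ Y), IsPB p₁ p₂ f g ∧ S.Fib p₂
  eqv_of_iso : ∀ {X Y : C} (f : X ⟶ Y), IsIso f → S.Eqv f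
  two_out_of_six : ∀ {X Y Z W : C} (f : X ⟶ Y) (g : Y ⟶ Z) (h : Z ⟶ W),
    S.Eqv (f ≫ g) → S.Eqv (g ≫ h) →
    S.Eqv f ∧ S.Eqv g ∧ S.Eqv h ∧ S.Eqv (f ≫ g ≫ h)
  path_obj : ∀ X : C, ∃ (PX : C) (r : X ⟶ PX) (s t : PX ⟶ X), IsPathObj S r s t
  triv_fib_pb : ∀ {X Y Z P : C} (f : X ⟶ Z) (g : Y ⟶ Z) (p₁ : P ⟶ X) (p₂ : P ⟶ Y),
    S.Fib f → S.Eqv f → IsPB p₁ p₂ f g → S.Fib p₂ ∧ S.Eqv p₂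
  triv_fib_sect : ∀ {X Y : C} (f : X ⟶ Y), S.Fib f → S.Eqv f → ∃ s : Y ⟶ X, s ≫ f = 𝟙 Y

/-- Two parallel maps are homotopic: `(f,g)` factors through some path object. -/
def Homotopic {Z X : C} (f g : Z ⟶ X) : Prop :=
  ∃ (PX : C) (r : X ⟶ PX) (s t : PX ⟶ X), IsPathObj S r s t ∧
    ∃ H : Z ⟶ PX, H ≫ s = f ∧ H ≫ t = g

/-- `f` and `g` are fibrewise homotopic over the codomain of `p`:
`(f,g)` factors through some path object of `p` in the slice. -/
def FibHomotopic {Z X I : C} (p : X ⟶ I) (f g : Z ⟶ X) : Prop :=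
  ∃ (PX : C) (r : X ⟶ PX) (s t : PX ⟶ X), IsRelPathObj S p r s t ∧
    ∃ H : Z ⟶ PX, H ≫ s = f ∧ H ≫ t = g

/-- `IsNTypeFib S n f` says that `f` is a fibration of `(n-2)`-types; so `n = 0`
corresponds to hlevel `-2` (trivial fibrations), `n = 1` to propositions,
`n = 2` to sets and `n = 3` to groupoids. -/
def IsNTypeFib : ℕ → ∀ ⦃Y X : C⦄, (Y ⟶ X) → Prop
  | 0, _, _, f => S.Fib f ∧ S.Eqv f
  | n+1, Y, _, f => S.Fib f ∧ ∃ (PY W : C) (r : Y ⟶ PY) (s t : PY ⟶ Y)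
      (π₁ π₂ : W ⟶ Y) (h : PY ⟶ W),
      IsRelPathObj S f r s t ∧ IsPB π₁ π₂ f f ∧ h ≫ π₁ = s ∧ h ≫ π₂ = t ∧
      IsNTypeFib n h

/-- The (strictly) commutative square with vertical fibrations `g` (left) and `f` (right),
top `top` and bottom `bot`, is a homotopy pullback: the induced map to the actual
pullback is an equivalence. -/
def IsHomotopyPB {D Cc B A : C} (g : D ⟶ Cc) (top : D ⟶ B) (f : B ⟶ A) (bot : Cc ⟶ A) :
    Prop :=
  g ≫ bot = top ≫ f ∧ ∃ (P : C) (p₁ : P ⟶ Cc) (p₂ : P ⟶ B) (h : D ⟶ P),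
    IsPB p₁ p₂ bot f ∧ h ≫ p₁ = g ∧ h ≫ p₂ = top ∧ S.Eqv h

/-- A transport structure on the fibration `p : Y ⟶ X`, relative to the path object
`(PX, r, s, t)` and the pullback `(Q, q₁, q₂)` of `s : PX ⟶ X` along `p`:
a map `Γ : Y ×_X PX ⟶ Y` with `p ∘ Γ = t ∘ q₂` and `Γ ∘ (1_Y, r ∘ p) ≃_X 1_Y`. -/
def IsTransport {Y X PX Q : C} (p : Y ⟶ X) (r : X ⟶ PX) (s t : PX ⟶ X)
    (q₁ : Q ⟶ Y) (q₂ : Q ⟶ PX) (Γ : Q ⟶ Y) : Prop :=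
  Γ ≫ p = q₂ ≫ t ∧
  ∀ j : Y ⟶ Q, j ≫ q₁ = 𝟙 Y → j ≫ q₂ = p ≫ r → FibHomotopic S p (j ≫ Γ) (𝟙 Y)

/-- A fibration `p : Y ⟶ X` is univalent: whenever `f, g : Z ⟶ X` and
`w : f*p ⟶ g*p` is an equivalence over `Z`, there is a homotopy `H` from `f` to `g`
such that `w` is fibrewise homotopic over `Z` to the map induced by `H` and a
transport structure on `p`. -/
def Univalent {Y X : C} (p : Y ⟶ X) : Prop :=
  ∀ {Z Zf Zg : C} (f g : Z ⟶ X) (a₁ : Zf ⟶ Z) (a₂ : Zf ⟶ Y) (b₁ : Zg ⟶ Z) (b₂ : Zg ⟶ Y),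
    IsPB a₁ a₂ f p → IsPB b₁ b₂ g p →
    ∀ w : Zf ⟶ Zg, w ≫ b₁ = a₁ → S.Eqv w →
    ∃ (PX Q : C) (r : X ⟶ PX) (s t : PX ⟶ X) (q₁ : Q ⟶ Y) (q₂ : Q ⟶ PX) (Γ : Q ⟶ Y)
      (H : Z ⟶ PX) (k : Zf ⟶ Q) (w' : Zf ⟶ Zg),
      IsPathObj S r s t ∧ IsPB q₁ q₂ p s ∧ IsTransport S p r s t q₁ q₂ Γ ∧
      H ≫ s = f ∧ H ≫ t = g ∧
      k ≫ q₁ = a₂ ∧ k ≫ q₂ = a₁ ≫ H ∧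
      w' ≫ b₁ = a₁ ∧ w' ≫ b₂ = k ≫ Γ ∧
      FibHomotopic S b₁ w w'

/-- `π : E ⟶ U` is a representation for the class `Small`: it is small, and every
small fibration is a homotopy pullback of it. -/
def IsRepresentation (Small : ∀ ⦃X Y : C⦄, (X ⟶ Y) → Prop) {E U : C} (π : E ⟶ U) : Prop :=
  Small π ∧ ∀ ⦃B A : C⦄ (f : B ⟶ A), Small f →
    ∃ (c : A ⟶ U) (top : B ⟶ E), IsHomotopyPB S f top π c

/-- `M` is a good lift for the universal property of the homotopy Π-type
`(pE, u₁, u₂, ε)` of `g` along `f`, at the map `h : A ⟶ X` with chosen pullback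
`(Ah, v₁, v₂)` of `h` along `f` and `m : f*h ⟶ g` over `Y`. -/
def HPiLiftGood {Y X Z E F A Ah : C} (f : Y ⟶ X) (g : Z ⟶ Y) (pE : E ⟶ X)
    (u₁ : F ⟶ E) (u₂ : F ⟶ Y) (ε : F ⟶ Z)
    (h : A ⟶ X) (v₁ : Ah ⟶ A) (v₂ : Ah ⟶ Y) (m : Ah ⟶ Z) (M : A ⟶ E) : Prop :=
  M ≫ pE = h ∧ ∀ fM : Ah ⟶ F, fM ≫ u₁ = v₁ ≫ M → fM ≫ u₂ = v₂ →
    FibHomotopic S g (fM ≫ ε) m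

/-- `(pE, u₁, u₂, ε)` is a homotopy Π-type of the fibration `g : Z ⟶ Y` along the
fibration `f : Y ⟶ X`.  Here `pE : E ⟶ X` is the Π-fibration, `(F, u₁, u₂)` is a
pullback of `pE` along `f`, and `ε : f*pE ⟶ g` is the counit (a map over `Y`). -/
structure IsHPi {Y X Z E F : C} (f : Y ⟶ X) (g : Z ⟶ Y) (pE : E ⟶ X)
    (u₁ : F ⟶ E) (u₂ : F ⟶ Y) (ε : F ⟶ Z) : Prop where
  fib : S.Fib pE
  pb : IsPB u₁ u₂ pE f
  over' : ε ≫ g = u₂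
  lift : ∀ {A Ah : C} (h : A ⟶ X) (v₁ : Ah ⟶ A) (v₂ : Ah ⟶ Y), IsPB v₁ v₂ h f →
    ∀ m : Ah ⟶ Z, m ≫ g = v₂ →
      ∃ M : A ⟶ E, HPiLiftGood S f g pE u₁ u₂ ε h v₁ v₂ m M
  unique : ∀ {A Ah : C} (h : A ⟶ X) (v₁ : Ah ⟶ A) (v₂ : Ah ⟶ Y), IsPB v₁ v₂ h f →
    ∀ m : Ah ⟶ Z, m ≫ g = v₂ → ∀ M M' : A ⟶ E,
      HPiLiftGood S f g pE u₁ u₂ ε h v₁ v₂ m M →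
      HPiLiftGood S f g pE u₁ u₂ ε h v₁ v₂ m M' →
      FibHomotopic S pE M M'

/-- The path category has homotopy Π-types. -/
def HasHPi : Prop := ∀ ⦃Y X Z : C⦄ (f : Y ⟶ X) (g : Z ⟶ Y), S.Fib f → S.Fib g →
  ∃ (E F : C) (pE : E ⟶ X) (u₁ : F ⟶ E) (u₂ : F ⟶ Y) (ε : F ⟶ Z),
    IsHPi S f g pE u₁ u₂ ε

/-- A class of small fibrations: contained in the fibrations, containing all
isomorphisms, closed under composition and stable under homotopy pullback. -/
def IsSmallClass (Small : ∀ ⦃X Y : C⦄, (X ⟶ Y) → Prop) : Prop :=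
  (∀ ⦃X Y : C⦄ (f : X ⟶ Y), Small f → S.Fib f) ∧
  (∀ ⦃X Y : C⦄ (f : X ⟶ Y), IsIso f → Small f) ∧
  (∀ ⦃X Y Z : C⦄ (f : X ⟶ Y) (g : Y ⟶ Z), Small f → Small g → Small (f ≫ g)) ∧
  (∀ ⦃D Cc B A : C⦄ (g : D ⟶ Cc) (top : D ⟶ B) (f : B ⟶ A) (bot : Cc ⟶ A),
    S.Fib g → S.Fib f → Small f → IsHomotopyPB S g top f bot → Small g)

/-- The class `Small` is closed under homotopy Π-types along arbitrary fibrations: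
it is impredicative (polymorphic). -/
def ClosedUnderHPi (Small : ∀ ⦃X Y : C⦄, (X ⟶ Y) → Prop) : Prop :=
  ∀ ⦃Y X Z : C⦄ (f : Y ⟶ X) (g : Z ⟶ Y), S.Fib f → Small g →
    ∀ ⦃E F : C⦄ (pE : E ⟶ X) (u₁ : F ⟶ E) (u₂ : F ⟶ Y) (ε : F ⟶ Z),
      IsHPi S f g pE u₁ u₂ ε → Small pE

end PathCatDefs

end EffPaper
open CategoryTheory
namespace EffPaper
-- [assume p1 kit present]

/-! ### The category `EFF`. -/

/-- An object of `EFF`: a set `A`, a realizer function `α : A → ℕ`, sets of 1-cells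
`hom a a' ⊆ ℕ`, and partial computable functions computing identity, inverse and
composite 1-cells from the realizers of the relevant data. -/
structure EffObj : Type 1 where
  A : Type
  α : A → ℕ
  hom : A → A → Set ℕ
  idc : CompFinds (fun a : A => α a) (fun a => hom a a)
  invc : CompFinds
    (fun x : {p : A × A × ℕ // p.2.2 ∈ hom p.1 p.2.1} =>
      Nat.pair (α x.1.1) (Nat.pair (α x.1.2.1) x.1.2.2))
    (fun x => hom x.1.2.1 x.1.1)
  compc : CompFinds
    (fun x : {p : A × A × A × ℕ × ℕ //
        p.2.2.2.1 ∈ hom p.1 p.2.1 ∧ p.2.2.2.2 ∈ hom p.2.1 p.2.2.1} =>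
      Nat.pair (α x.1.1) (Nat.pair (α x.1.2.1) (Nat.pair (α x.1.2.2.1)
        (Nat.pair x.1.2.2.2.1 x.1.2.2.2.2))))
    (fun x => hom x.1.1 x.1.2.2.1)

/-- The 1-cells of an object of `EFF` between `a` and `a'`. -/
def EffObj.Cell (A : EffObj) (a a' : A.A) : Type := {n : ℕ // n ∈ A.hom a a'}

/-- A morphism of `EFF`: a function on 0-cells and functions on 1-cells, both
computably tracked. -/
structure EffHom (B A : EffObj) : Type where
  f0 : B.A → A.A
  f1 : ∀ b b' : B.A, B.Cell b b' → A.Cell (f0 b) (f0 b')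
  tr0 : CompComputes (fun b : B.A => B.α b) (fun b => A.α (f0 b))
  tr1 : CompComputes
    (fun x : (b : B.A) × (b' : B.A) × B.Cell b b' =>
      Nat.pair (B.α x.1) (Nat.pair (B.α x.2.1) x.2.2.val))
    (fun x => (f1 x.1 x.2.1 x.2.2).val)

instance : Category.{0} EffObj where
  Hom B A := EffHom B A
  id A :=
    { f0 := fun a => a
      f1 := fun _ _ π => π
      tr0 := CompComputes.id _
      tr1 := (CompComputes.projR _ _).comp (CompComputes.projR _ _) }
  comp {X Y Z} f g :=
    { f0 := fun b => g.f0 (f.f0 b)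
      f1 := fun b b' π => g.f1 _ _ (f.f1 b b' π)
      tr0 := (g.tr0.precomp f.f0).comp f.tr0
      tr1 := by
        have hg := g.tr1.precomp
          (fun x : (b : X.A) × (b' : X.A) × X.Cell b b' =>
            (⟨f.f0 x.1, f.f0 x.2.1, f.f1 x.1 x.2.1 x.2.2⟩ :
              (b : Y.A) × (b' : Y.A) × Y.Cell b b'))
        refine hg.comp ?_
        refine CompComputes.pair ?_ (CompComputes.pair ?_ f.tr1)
        · exact (f.tr0.precomp (fun x : (b : X.A) × (b' : X.A) × X.Cell b b' => x.1)).comp (CompComputes.projL _ _)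
        · exact (f.tr0.precomp (fun x : (b : X.A) × (b' : X.A) × X.Cell b b' => x.2.1)).comp
            ((CompComputes.projL _ _).comp (CompComputes.projR _ _)) }

end EffPaper
namespace EffPaper
open CategoryTheory

/-! ### Homotopies, equivalences and fibrations in `EFF`. -/

/-- Two parallel maps in `EFF` are homotopic if there is a partial computable function
computing, from the realizer of each `b`, a 1-cell from `f b` to `g b`. -/
def EffHomotopic {B A : EffObj} (f g : EffHom B A) : Prop :=
  CompFinds (fun b : B.A => B.α b) (fun b => A.hom (f.f0 b) (g.f0 b))

/-- A map in `EFF` is a (homotopy) equivalence if it has a homotopy inverse. -/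
def EffEqv {B A : EffObj} (f : B ⟶ A) : Prop :=
  ∃ g : A ⟶ B, EffHomotopic (f ≫ g) (𝟙 B) ∧ EffHomotopic (g ≫ f) (𝟙 A)

/-- A map in `EFF` is a fibration: (i) 1-cells `π : f b → a` downstairs can be
computably lifted to 1-cells `ρ : b → b'` upstairs with `f b' = a`, `f ρ = π`;
(ii) given `ρ ∈ ℬ(b,b')` and `π ∈ 𝒜(fb,fb')` one can compute `ρ' ∈ ℬ(b,b')`
with `f ρ' = π`. -/
def EffFib {B A : EffObj} (f : B ⟶ A) : Prop :=
  (∃ φ ψ : ℕ →. ℕ, Partrec φ ∧ Partrec ψ ∧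
    ∀ (b : B.A) (a : A.A) (π : ℕ), π ∈ A.hom (f.f0 b) a →
      ∃ (b' : B.A) (ρ : B.Cell b b'),
        f.f0 b' = a ∧ (f.f1 b b' ρ).val = π ∧
        B.α b' ∈ φ (Nat.pair (B.α b) (Nat.pair (A.α a) π)) ∧
        ρ.val ∈ ψ (Nat.pair (B.α b) (Nat.pair (A.α a) π))) ∧
  (∃ χ : ℕ →. ℕ, Partrec χ ∧
    ∀ (b b' : B.A) (ρ : B.Cell b b') (π : ℕ), π ∈ A.hom (f.f0 b) (f.f0 b') →
      ∃ ρ' : B.Cell b b', (f.f1 b b' ρ').val = π ∧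
        ρ'.val ∈ χ (Nat.pair (B.α b) (Nat.pair (B.α b') (Nat.pair ρ.val π))))

/-- The path structure on `EFF`: fibrations and (homotopy) equivalences. -/
def EffPS : PathStruct EffObj where
  Fib := fun {_ _} f => EffFib f
  Eqv := fun {_ _} f => EffEqv f

/-- A fibration in `EFF` is a standard discrete fibration if elements of the domain
are determined by their image and their realizer. -/
def EffStdDisc {B A : EffObj} (f : B ⟶ A) : Prop :=
  EffFib f ∧ ∀ b b' : B.A, f.f0 b = f.f0 b' → B.α b = B.α b' → b = b'

/-- A fibration in `EFF` is discrete if it can be written as a standard discrete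
fibration after an equivalence. -/
def EffDisc {B A : EffObj} (f : B ⟶ A) : Prop :=
  EffFib f ∧ ∃ (B' : EffObj) (w : B ⟶ B') (g : B' ⟶ A),
    EffEqv w ∧ EffStdDisc g ∧ w ≫ g = f

end EffPaper

namespace EffPaper

open CategoryTheory

/-!
All constructions act on families of points and 1-cells indexed by an arbitrary type `W` and
*tracked* by `I : W → ℕ`, i.e. with realizers computable from `I`: identities, inverses,
composites, morphisms and the two lifting properties of fibrations act on tracked families, and
objects, morphisms and fibrations are built from such actions.

(1) An isomorphism `f` factors as `f ≫ 𝟙`. (2) Writing `f = w ≫ s` with `w` an equivalence and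
`s` standard discrete, the canonical pullback of `f` is equivalent, through the map induced by
`w`, to the pullback of `s`, which is standard discrete; a homotopy pullback is equivalent to the
canonical one. (3) A standard discrete `s` followed by an equivalence `v` equals an equivalence
followed by the pullback of `s` along a homotopy inverse of `v`. (4) For `g = v ≫ t` with `t`
standard discrete, the explicit Π-object of `t` (sections of `t` over the fibres of `f`, with a
code computing them) is a homotopy Π-type of `t`, hence, after correcting its counit through
`v`, of `g`. Its projection is standard discrete because a section is determined by its code, and
any homotopy Π-type of `g` along `f` is equivalent to it over the base.
-/

/-! ### Tracked families -/

namespace CompComputes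

protected theorem congr {X : Sort*} {I I' O O' : X → ℕ} (h : CompComputes I O)
    (hI : ∀ x, I x = I' x) (hO : ∀ x, O x = O' x) : CompComputes I' O' := by
  obtain ⟨F, pF, s⟩ := h
  exact ⟨F, pF, fun x => hI x ▸ hO x ▸ s x⟩

protected theorem of_partrec {X : Sort*} {I J O : X → ℕ} {F : ℕ →. ℕ} (pF : Partrec F)
    (hJ : CompComputes I J) (hO : ∀ x, O x ∈ F (J x)) : CompComputes I O :=
  CompComputes.comp ⟨F, pF, hO⟩ hJ

protected theorem map {X : Sort*} {I O : X → ℕ} (h : CompComputes I O) {K : ℕ → ℕ}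
    (hK : Computable K) : CompComputes I (fun x => K (O x)) :=
  CompComputes.comp ⟨fun n => Part.some (K n), hK.partrec, fun _ => Part.mem_some _⟩ h

protected theorem unpair_fst {X : Sort*} {I O : X → ℕ} (h : CompComputes I O) :
    CompComputes I (fun x => (O x).unpair.1) :=
  h.map (Primrec.to_comp (Primrec.fst.comp Primrec.unpair))

protected theorem unpair_snd {X : Sort*} {I O : X → ℕ} (h : CompComputes I O) :
    CompComputes I (fun x => (O x).unpair.2) :=
  h.map (Primrec.to_comp (Primrec.snd.comp Primrec.unpair))

protected theorem fst {X : Sort*} {I a b : X → ℕ}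
    (h : CompComputes I (fun x => Nat.pair (a x) (b x))) : CompComputes I a :=
  h.unpair_fst.congr (fun _ => rfl) (fun _ => by simp)

protected theorem snd {X : Sort*} {I a b : X → ℕ}
    (h : CompComputes I (fun x => Nat.pair (a x) (b x))) : CompComputes I b :=
  h.unpair_snd.congr (fun _ => rfl) (fun _ => by simp)

protected theorem of_computable {X : Sort*} (I : X → ℕ) {K : ℕ → ℕ} (hK : Computable K) :
    CompComputes I (fun x => K (I x)) :=
  (CompComputes.id I).map hK

end CompComputes

open Nat.Partrec (Code) in
def evalN (e n : ℕ) : Part ℕ := Code.eval (Denumerable.ofNat Code e) n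

theorem evalN_partrec : Partrec₂ evalN :=
  Nat.Partrec.Code.eval_part.comp ((Computable.ofNat _).comp Computable.fst) Computable.snd

theorem CompComputes.of_evalN {X : Sort*} {I E N O : X → ℕ}
    (hEN : CompComputes I (fun x => Nat.pair (E x) (N x)))
    (hO : ∀ x, O x ∈ evalN (E x) (N x)) : CompComputes I O :=
  CompComputes.of_partrec (evalN_partrec.comp (Computable.fst.comp Computable.unpair)
    (Computable.snd.comp Computable.unpair)) hEN (fun x => by simpa using hO x)

open Nat.Partrec (Code) in
theorem CompComputes.smn {X : Sort*} {I J O : X → ℕ}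
    (h : CompComputes (fun x => Nat.pair (I x) (J x)) O) :
    ∃ K : ℕ → ℕ, Computable K ∧ ∀ x, O x ∈ evalN (K (I x)) (J x) := by
  obtain ⟨F, pF, s⟩ := h
  obtain ⟨c, hc⟩ := Code.exists_code.1 (Partrec.nat_iff.1 pF)
  refine ⟨fun a => Encodable.encode (c.curry a), Primrec.to_comp
    (Primrec.encode.comp (Code.primrec₂_curry.comp (Primrec.const c) Primrec.id)), fun x => ?_⟩
  rw [evalN, Denumerable.ofNat_encode, Code.eval_curry, hc]
  exact s x

def Cells {T : Type} (hom : T → T → Set ℕ) {W : Sort*} (I : W → ℕ) (u v : W → T) : Prop :=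
  ∃ c : W → ℕ, (∀ x, c x ∈ hom (u x) (v x)) ∧ CompComputes I c

namespace Cells

variable {T : Type} {hom : T → T → Set ℕ} {W : Sort*} {I : W → ℕ} {u v : W → T}

theorem precomp {V : Sort*} (h : Cells hom I u v) (e : V → W) :
    Cells hom (fun y => I (e y)) (fun y => u (e y)) (fun y => v (e y)) := by
  obtain ⟨c, hc, tc⟩ := h
  exact ⟨fun y => c (e y), fun y => hc (e y), tc.precomp e⟩

protected theorem comp {J : W → ℕ} (h : Cells hom J u v) (hIJ : CompComputes I J) :
    Cells hom I u v := by
  obtain ⟨c, hc, tc⟩ := h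
  exact ⟨c, hc, tc.comp hIJ⟩

protected theorem congr {I' : W → ℕ} {u' v' : W → T} (h : Cells hom I u v)
    (hI : ∀ x, I x = I' x) (hu : ∀ x, u x = u' x) (hv : ∀ x, v x = v' x) :
    Cells hom I' u' v' := by
  obtain rfl : u = u' := funext hu
  obtain rfl : v = v' := funext hv
  obtain ⟨c, hc, tc⟩ := h
  exact ⟨c, hc, tc.congr hI (fun _ => rfl)⟩

end Cells

def Tracked (A : EffObj) {W : Sort*} (I : W → ℕ) (u : W → A.A) : Prop :=
  CompComputes I (fun x => A.α (u x))

theorem EffHom.tracked {B A : EffObj} (f : EffHom B A) {W : Sort*} {I : W → ℕ}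
    {u : W → B.A} (hu : Tracked B I u) : Tracked A I (fun x => f.f0 (u x)) :=
  (f.tr0.precomp u).comp hu

namespace Cells

variable {A : EffObj} {W : Sort*} {I : W → ℕ} {u v w : W → A.A}

protected theorem refl (hu : Tracked A I u) : Cells A.hom I u u := by
  obtain ⟨c, hc, tc⟩ := A.idc.toComputes
  exact ⟨fun x => c (u x), fun x => hc (u x), (tc.precomp u).comp hu⟩

protected theorem symm (hu : Tracked A I u) (hv : Tracked A I v) (h : Cells A.hom I u v) :
    Cells A.hom I v u := by
  obtain ⟨c, hc, tc⟩ := h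
  obtain ⟨o, ho, tO⟩ := A.invc.toComputes
  exact ⟨fun x => o ⟨(u x, v x, c x), hc x⟩, fun x => ho ⟨(u x, v x, c x), hc x⟩,
    (tO.precomp (fun x => ⟨(u x, v x, c x), hc x⟩)).comp (hu.pair (hv.pair tc))⟩

protected theorem trans (hu : Tracked A I u) (hv : Tracked A I v) (hw : Tracked A I w)
    (h₁ : Cells A.hom I u v) (h₂ : Cells A.hom I v w) : Cells A.hom I u w := by
  obtain ⟨c, hc, tc⟩ := h₁
  obtain ⟨d, hd, td⟩ := h₂
  obtain ⟨o, ho, tO⟩ := A.compc.toComputes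
  exact ⟨fun x => o ⟨(u x, v x, w x, c x, d x), hc x, hd x⟩,
    fun x => ho ⟨(u x, v x, w x, c x, d x), hc x, hd x⟩,
    (tO.precomp (fun x => ⟨(u x, v x, w x, c x, d x), hc x, hd x⟩)).comp
      (hu.pair (hv.pair (hw.pair (tc.pair td))))⟩

theorem map {C : EffObj} (f : EffHom A C) (hu : Tracked A I u) (hv : Tracked A I v)
    (h : Cells A.hom I u v) : Cells C.hom I (fun x => f.f0 (u x)) (fun x => f.f0 (v x)) := by
  obtain ⟨c, hc, tc⟩ := h
  exact ⟨fun x => (f.f1 (u x) (v x) ⟨c x, hc x⟩).val, fun x => (f.f1 _ _ _).prop,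
    (f.tr1.precomp (fun x => ⟨u x, v x, ⟨c x, hc x⟩⟩)).comp (hu.pair (hv.pair tc))⟩

end Cells

def EffObj.ofCells (T : Type) (α : T → ℕ) (hom : T → T → Set ℕ)
    (refl : ∀ {W : Type} {I : W → ℕ} {u : W → T}, CompComputes I (fun x => α (u x)) →
      Cells hom I u u)
    (symm : ∀ {W : Type} {I : W → ℕ} {u v : W → T}, CompComputes I (fun x => α (u x)) →
      CompComputes I (fun x => α (v x)) → Cells hom I u v → Cells hom I v u)
    (trans : ∀ {W : Type} {I : W → ℕ} {u v w : W → T}, CompComputes I (fun x => α (u x)) →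
      CompComputes I (fun x => α (v x)) → CompComputes I (fun x => α (w x)) →
      Cells hom I u v → Cells hom I v w → Cells hom I u w) : EffObj where
  A := T
  α := α
  hom := hom
  idc := by
    obtain ⟨c, hc, tc⟩ := refl (CompComputes.id α)
    exact tc.toFinds hc
  invc := by
    have t := CompComputes.id (fun x : {p : T × T × ℕ // p.2.2 ∈ hom p.1 p.2.1} =>
      Nat.pair (α x.1.1) (Nat.pair (α x.1.2.1) x.1.2.2))
    obtain ⟨c, hc, tc⟩ := symm t.fst t.snd.fst ⟨_, fun x => x.prop, t.snd.snd⟩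
    exact tc.toFinds hc
  compc := by
    have t := CompComputes.id (fun x : {p : T × T × T × ℕ × ℕ //
        p.2.2.2.1 ∈ hom p.1 p.2.1 ∧ p.2.2.2.2 ∈ hom p.2.1 p.2.2.1} =>
      Nat.pair (α x.1.1) (Nat.pair (α x.1.2.1) (Nat.pair (α x.1.2.2.1)
        (Nat.pair x.1.2.2.2.1 x.1.2.2.2.2))))
    obtain ⟨c, hc, tc⟩ := trans t.fst t.snd.fst t.snd.snd.fst
      ⟨_, fun x => x.prop.1, t.snd.snd.snd.fst⟩ ⟨_, fun x => x.prop.2, t.snd.snd.snd.snd⟩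
    exact tc.toFinds hc

theorem EffHom.ext {B A : EffObj} {F G : B ⟶ A} (h0 : ∀ b, F.f0 b = G.f0 b)
    (h1 : ∀ b b' (ρ : B.Cell b b'), (F.f1 b b' ρ).val = (G.f1 b b' ρ).val) : F = G := by
  obtain ⟨F0, F1, _, _⟩ := F
  obtain ⟨G0, G1, _, _⟩ := G
  obtain rfl : F0 = G0 := funext h0
  obtain rfl : F1 = G1 := by
    funext b b' ρ
    exact Subtype.ext (h1 b b' ρ)
  rfl

theorem EffHom.congr_f0 {B A : EffObj} {F G : B ⟶ A} (e : F = G) (b : B.A) :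
    F.f0 b = G.f0 b := by
  rw [e]

theorem EffHom.congr_f1 {B A : EffObj} {F G : B ⟶ A} (e : F = G) (b b' : B.A)
    (ρ : B.Cell b b') : (F.f1 b b' ρ).val = (G.f1 b b' ρ).val := by
  rw [e]

theorem EffHom.f1_congr {B A : EffObj} (f : EffHom B A) {b b' c c' : B.A}
    (eb : b = c) (eb' : b' = c') {m n : ℕ} (hm : m ∈ B.hom b b') (emn : m = n)
    (hn : n ∈ B.hom c c') : (f.f1 b b' ⟨m, hm⟩).val = (f.f1 c c' ⟨n, hn⟩).val := by
  subst eb eb' emn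
  rfl

theorem EffObj.mem_hom_of_eq {A : EffObj} {a a' b b' : A.A} (ea : a = a') (eb : b = b')
    {n : ℕ} (h : n ∈ A.hom a b) : n ∈ A.hom a' b' :=
  ea ▸ eb ▸ h

def CellsOver {B A : EffObj} (f : EffHom B A) {W : Sort*} (I : W → ℕ)
    (u v : W → B.A) (π : W → ℕ) : Prop :=
  ∃ c : W → ℕ, (∀ x, ∃ h : c x ∈ B.hom (u x) (v x), (f.f1 (u x) (v x) ⟨c x, h⟩).val = π x) ∧
    CompComputes I c

theorem CellsOver.cells {B A : EffObj} {f : EffHom B A} {W : Sort*} {I : W → ℕ}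
    {u v : W → B.A} {π : W → ℕ} (h : CellsOver f I u v π) : Cells B.hom I u v := by
  obtain ⟨c, hc, tc⟩ := h
  exact ⟨c, fun x => (hc x).1, tc⟩

/-! ### Fibrations, homotopies and equivalences -/

section Fibrations

variable {B A : EffObj} {f : B ⟶ A}

theorem EffFib.lift (hf : EffFib f) {W : Sort*} {I : W → ℕ} {u : W → B.A} {a : W → A.A}
    {π : W → ℕ} (hπ : ∀ x, π x ∈ A.hom (f.f0 (u x)) (a x)) (hu : Tracked B I u)
    (ha : Tracked A I a) (tπ : CompComputes I π) :
    ∃ v : W → B.A, (∀ x, f.f0 (v x) = a x) ∧ Tracked B I v ∧ CellsOver f I u v π := by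
  obtain ⟨φ, ψ, pφ, pψ, H⟩ := hf.1
  choose b' ρ e₁ e₂ e₃ e₄ using fun x => H (u x) (a x) (π x) (hπ x)
  exact ⟨b', e₁, CompComputes.of_partrec pφ (hu.pair (ha.pair tπ)) e₃,
    fun x => (ρ x).val, fun x => ⟨(ρ x).prop, e₂ x⟩,
    CompComputes.of_partrec pψ (hu.pair (ha.pair tπ)) e₄⟩

theorem EffFib.lift_between (hf : EffFib f) {W : Sort*} {I : W → ℕ} {u v : W → B.A}
    {π : W → ℕ} (hc : Cells B.hom I u v) (hu : Tracked B I u) (hv : Tracked B I v)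
    (hπ : ∀ x, π x ∈ A.hom (f.f0 (u x)) (f.f0 (v x))) (tπ : CompComputes I π) :
    CellsOver f I u v π := by
  obtain ⟨ρ, hρ, tρ⟩ := hc
  obtain ⟨χ, pχ, hχ⟩ := hf.2
  choose ρ' h₁ h₂ using fun x => hχ (u x) (v x) ⟨ρ x, hρ x⟩ (π x) (hπ x)
  exact ⟨fun x => (ρ' x).val, fun x => ⟨(ρ' x).prop, h₁ x⟩,
    CompComputes.of_partrec pχ (hu.pair (hv.pair (tρ.pair tπ))) h₂⟩

theorem EffFib.of_lift (f : B ⟶ A)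
    (lift : ∀ {W : Type} {I : W → ℕ} {u : W → B.A} {a : W → A.A} {π : W → ℕ},
      (∀ x, π x ∈ A.hom (f.f0 (u x)) (a x)) → Tracked B I u → Tracked A I a →
      CompComputes I π →
      ∃ v : W → B.A, (∀ x, f.f0 (v x) = a x) ∧ Tracked B I v ∧ CellsOver f I u v π)
    (lift_between : ∀ {W : Type} {I : W → ℕ} {u v : W → B.A} {π : W → ℕ},
      Cells B.hom I u v → Tracked B I u → Tracked B I v →
      (∀ x, π x ∈ A.hom (f.f0 (u x)) (f.f0 (v x))) → CompComputes I π →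
      CellsOver f I u v π) : EffFib f := by
  constructor
  · have t := CompComputes.id (fun s : {p : B.A × A.A × ℕ // p.2.2 ∈ A.hom (f.f0 p.1) p.2.1} =>
      Nat.pair (B.α s.1.1) (Nat.pair (A.α s.1.2.1) s.1.2.2))
    obtain ⟨v, hv, ⟨φ, pφ, sφ⟩, c, hc, ψ, pψ, sψ⟩ :=
      lift (fun s => s.prop) t.fst t.snd.fst t.snd.snd
    refine ⟨φ, ψ, pφ, pψ, fun b a π hπ => ?_⟩
    obtain ⟨h, he⟩ := hc ⟨(b, a, π), hπ⟩
    exact ⟨_, ⟨_, h⟩, hv _, he, sφ ⟨(b, a, π), hπ⟩, sψ ⟨(b, a, π), hπ⟩⟩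
  · have t := CompComputes.id (fun s : {p : B.A × B.A × ℕ × ℕ // p.2.2.1 ∈ B.hom p.1 p.2.1 ∧
        p.2.2.2 ∈ A.hom (f.f0 p.1) (f.f0 p.2.1)} =>
      Nat.pair (B.α s.1.1) (Nat.pair (B.α s.1.2.1) (Nat.pair s.1.2.2.1 s.1.2.2.2)))
    obtain ⟨d, hd, χ, pχ, sχ⟩ := lift_between ⟨_, fun s => s.prop.1, t.snd.snd.fst⟩
      t.fst t.snd.fst (fun s => s.prop.2) t.snd.snd.snd
    refine ⟨χ, pχ, fun b b' ρ π hπ => ?_⟩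
    obtain ⟨h, he⟩ := hd ⟨(b, b', ρ.val, π), ρ.prop, hπ⟩
    exact ⟨⟨_, h⟩, he, sχ ⟨(b, b', ρ.val, π), ρ.prop, hπ⟩⟩

end Fibrations

section Homotopies

variable {B A : EffObj}

theorem effHomotopic_iff_cells {F G : B ⟶ A} :
    EffHomotopic F G ↔ Cells A.hom B.α F.f0 G.f0 :=
  ⟨fun h => h.toComputes, fun ⟨_, hc, tc⟩ => tc.toFinds hc⟩

theorem EffHomotopic.of_f0_eq {F G : B ⟶ A} (h : ∀ b, F.f0 b = G.f0 b) :
    EffHomotopic F G :=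
  effHomotopic_iff_cells.2 ((Cells.refl F.tr0).congr (fun _ => rfl) (fun _ => rfl) h)

@[simp]
theorem EffHomotopic.refl (F : B ⟶ A) : EffHomotopic F F :=
  .of_f0_eq fun _ => rfl

theorem EffHomotopic.symm {F G : B ⟶ A} (h : EffHomotopic F G) : EffHomotopic G F :=
  effHomotopic_iff_cells.2 ((effHomotopic_iff_cells.1 h).symm F.tr0 G.tr0)

theorem EffHomotopic.trans {F G H : B ⟶ A} (h₁ : EffHomotopic F G) (h₂ : EffHomotopic G H) :
    EffHomotopic F H :=
  effHomotopic_iff_cells.2 ((effHomotopic_iff_cells.1 h₁).trans F.tr0 G.tr0 H.tr0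
    (effHomotopic_iff_cells.1 h₂))

theorem EffHomotopic.whiskerLeft {Q : EffObj} (k : Q ⟶ B) {F G : B ⟶ A}
    (h : EffHomotopic F G) : EffHomotopic (k ≫ F) (k ≫ G) :=
  effHomotopic_iff_cells.2 (((effHomotopic_iff_cells.1 h).precomp k.f0).comp k.tr0)

theorem EffHomotopic.whiskerRight {C : EffObj} {F G : B ⟶ A} (h : EffHomotopic F G)
    (k : A ⟶ C) : EffHomotopic (F ≫ k) (G ≫ k) :=
  effHomotopic_iff_cells.2 ((effHomotopic_iff_cells.1 h).map k F.tr0 G.tr0)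

theorem EffEqv.of_inverse {f : B ⟶ A} (g : A ⟶ B) (h₁ : f ≫ g = 𝟙 B) (h₂ : g ≫ f = 𝟙 A) :
    EffEqv f :=
  ⟨g, h₁ ▸ .refl _, h₂ ▸ .refl _⟩

theorem EffEqv.of_isIso (f : B ⟶ A) [IsIso f] : EffEqv f :=
  .of_inverse (inv f) (IsIso.hom_inv_id f) (IsIso.inv_hom_id f)

theorem EffEqv.comp {C : EffObj} {a : B ⟶ A} {b : A ⟶ C} (ha : EffEqv a) (hb : EffEqv b) :
    EffEqv (a ≫ b) := by
  obtain ⟨a', haa', ha'a⟩ := ha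
  obtain ⟨b', hbb', hb'b⟩ := hb
  refine ⟨b' ≫ a', ?_, ?_⟩
  · have h := (hbb'.whiskerLeft a).whiskerRight a'
    simp only [Category.comp_id, Category.assoc] at h ⊢
    exact h.trans haa'
  · have h := (ha'a.whiskerLeft b').whiskerRight b
    simp only [Category.comp_id, Category.assoc] at h ⊢
    exact h.trans hb'b

end Homotopies

local infix:50 " ≃ₕ " => EffHomotopic

instance {B A : EffObj} : @Trans (B ⟶ A) (B ⟶ A) (B ⟶ A) EffHomotopic EffHomotopic EffHomotopic :=
  ⟨EffHomotopic.trans⟩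

theorem EffFib.id (A : EffObj) : EffFib (𝟙 A) :=
  .of_lift _ (fun {_ _ _ a π} hπ _ ha tπ => ⟨a, fun _ => rfl, ha, π, fun x => ⟨hπ x, rfl⟩, tπ⟩)
    (fun {_ _ _ _ π} _ _ _ hπ tπ => ⟨π, fun x => ⟨hπ x, rfl⟩, tπ⟩)

theorem EffFib.comp {X Y Z : EffObj} {f : X ⟶ Y} {g : Y ⟶ Z} (hf : EffFib f)
    (hg : EffFib g) : EffFib (f ≫ g) := by
  refine .of_lift _ (fun hπ hu ha tπ => ?_) (fun hc hu hv hπ tπ => ?_)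
  · obtain ⟨y, hy, ty, c₁, hc₁, tc₁⟩ := hg.lift hπ (f.tracked hu) ha tπ
    obtain ⟨x, hx, tx, c₂, hc₂, tc₂⟩ := hf.lift (fun s => (hc₁ s).1) hu ty tc₁
    refine ⟨x, fun s => (congrArg g.f0 (hx s)).trans (hy s), tx, c₂, fun s => ?_, tc₂⟩
    exact ⟨(hc₂ s).1, (g.f1_congr rfl (hx s) _ (hc₂ s).2 (hc₁ s).1).trans (hc₁ s).2⟩
  · obtain ⟨σ, hσ, tσ⟩ :=
      hg.lift_between (hc.map f hu hv) (f.tracked hu) (f.tracked hv) hπ tπ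
    obtain ⟨ρ, hρ, tρ⟩ := hf.lift_between hc hu hv (fun s => (hσ s).1) tσ
    exact ⟨ρ, fun s => ⟨(hρ s).1, (g.f1_congr rfl rfl _ (hρ s).2 (hσ s).1).trans (hσ s).2⟩, tρ⟩

theorem EffFib.of_isIso {X Y : EffObj} (f : X ⟶ Y) [IsIso f] : EffFib f := by
  set i := inv f
  have hfi : ∀ x, i.f0 (f.f0 x) = x := EffHom.congr_f0 (IsIso.hom_inv_id f)
  have hif : ∀ y, f.f0 (i.f0 y) = y := EffHom.congr_f0 (IsIso.inv_hom_id f)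
  have hif₁ : ∀ y y' (ρ : Y.Cell y y'), (f.f1 _ _ (i.f1 y y' ρ)).val = ρ.val :=
    EffHom.congr_f1 (IsIso.inv_hom_id f)
  have back : ∀ {W : Type} {I : W → ℕ} {u : W → X.A} {a : W → Y.A} {π : W → ℕ}
      (hπ : ∀ s, π s ∈ Y.hom (f.f0 (u s)) (a s)), Tracked X I u → Tracked Y I a →
      CompComputes I π → CellsOver f I u (fun s => i.f0 (a s)) π := by
    intro W I u a π hπ hu ha tπ
    refine ⟨fun s => (i.f1 _ _ ⟨π s, hπ s⟩).val, fun s => ⟨(hfi (u s)).symm ▸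
      (i.f1 _ _ ⟨π s, hπ s⟩).prop, ?_⟩, ?_⟩
    · exact (f.f1_congr (hfi (u s)).symm rfl _ rfl (i.f1 _ _ ⟨π s, hπ s⟩).prop).trans
        (hif₁ _ _ _)
    · exact (i.tr1.precomp (fun s => ⟨f.f0 (u s), a s, ⟨π s, hπ s⟩⟩)).comp
        ((f.tracked hu).pair (ha.pair tπ))
  refine .of_lift f (fun hπ hu ha tπ => ⟨_, fun s => hif _, i.tracked ha, back hπ hu ha tπ⟩)
    (fun {_ _ u v _} _ hu hv hπ tπ => ?_)
  have e : (fun s => i.f0 (f.f0 (v s))) = v := funext fun s => hfi (v s)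
  exact e ▸ back hπ hu (f.tracked hv) tπ

theorem EffStdDisc.id (A : EffObj) : EffStdDisc (𝟙 A) :=
  ⟨EffFib.id A, fun _ _ e _ => e⟩

theorem EffStdDisc.comp {X Y Z : EffObj} {f : X ⟶ Y} {g : Y ⟶ Z} (hf : EffStdDisc f)
    (hg : EffStdDisc g) : EffStdDisc (f ≫ g) := by
  refine ⟨hf.1.comp hg.1, fun x x' h₀ hα => hf.2 x x' (hg.2 _ _ h₀ ?_) hα⟩
  obtain ⟨F, -, s⟩ := f.tr0
  exact Part.mem_unique (s x) (by simpa only [hα] using s x')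

theorem EffDisc.of_isIso {X Y : EffObj} (f : X ⟶ Y) [IsIso f] : EffDisc f :=
  ⟨.of_isIso f, Y, f, 𝟙 Y, .of_isIso f, .id Y, Category.comp_id f⟩

abbrev EffObj.Arrow (Q : EffObj) : Type := (q : Q.A) × (q' : Q.A) × Q.Cell q q'

/-- The input from which a morphism of `EFF` computes its action on a 1-cell. -/
abbrev EffObj.arrowCode (Q : EffObj) (x : Q.Arrow) : ℕ :=
  Nat.pair (Q.α x.1) (Nat.pair (Q.α x.2.1) x.2.2.val)

theorem EffObj.tracked_arrow_src (Q : EffObj) : Tracked Q Q.arrowCode (fun x => x.1) :=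
  (CompComputes.id _).fst

theorem EffObj.tracked_arrow_tgt (Q : EffObj) : Tracked Q Q.arrowCode (fun x => x.2.1) :=
  (CompComputes.id _).snd.fst

theorem EffObj.cells_arrow (Q : EffObj) : Cells Q.hom Q.arrowCode (fun x => x.1) (fun x => x.2.1) :=
  ⟨fun x => x.2.2.val, fun x => x.2.2.prop, (CompComputes.id _).snd.snd⟩

theorem Cells.arrows_of_homotopic {Q B : EffObj} (F : Q ⟶ B) {v : Q.A → B.A}
    (tv : Tracked B Q.α v) (h : Cells B.hom Q.α F.f0 v) :
    Cells B.hom Q.arrowCode (fun x => v x.1) (fun x => v x.2.1) := by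
  have ts := Q.tracked_arrow_src
  have tt := Q.tracked_arrow_tgt
  have tv₁ : Tracked B Q.arrowCode (fun x => v x.1) := (tv.precomp _).comp ts
  have tv₂ : Tracked B Q.arrowCode (fun x => v x.2.1) := (tv.precomp _).comp tt
  have h₁ := ((h.precomp (fun x : Q.Arrow => x.1)).comp ts).symm (F.tracked ts) tv₁
  have h₂ := (h.precomp (fun x : Q.Arrow => x.2.1)).comp tt
  exact (h₁.trans tv₁ (F.tracked ts) (F.tracked tt) (Q.cells_arrow.map F ts tt)).trans
    tv₁ (F.tracked tt) tv₂ h₂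

theorem EffHom.exists_of_cellsOver {Q Z Y : EffObj} {g : Z ⟶ Y} (w : Q ⟶ Y)
    {z : Q.A → Z.A} (hz : ∀ q, g.f0 (z q) = w.f0 q) (tz : Tracked Z Q.α z)
    (h : CellsOver g Q.arrowCode (fun x => z x.1) (fun x => z x.2.1)
      (fun x => (w.f1 x.1 x.2.1 x.2.2).val)) :
    ∃ m : Q ⟶ Z, (∀ q, m.f0 q = z q) ∧ m ≫ g = w := by
  obtain ⟨d, hd, td⟩ := h
  exact ⟨⟨z, fun q q' ρ => ⟨d ⟨q, q', ρ⟩, (hd ⟨q, q', ρ⟩).1⟩, tz, td⟩, fun _ => rfl,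
    EffHom.ext hz (fun q q' ρ => (hd ⟨q, q', ρ⟩).2)⟩

theorem EffFib.strictify {Q Z Y : EffObj} {g : Z ⟶ Y} (hg : EffFib g) (m₀ : Q ⟶ Z)
    (w : Q ⟶ Y) (h : EffHomotopic (m₀ ≫ g) w) :
    ∃ m : Q ⟶ Z, m ≫ g = w ∧ EffHomotopic m₀ m := by
  obtain ⟨c, hc, tc⟩ := effHomotopic_iff_cells.1 h
  obtain ⟨z, hz, tz, hl⟩ := hg.lift hc (m₀.tracked (CompComputes.id _)) w.tr0 tc
  obtain ⟨m, hm, hmg⟩ := EffHom.exists_of_cellsOver w hz tz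
    (hg.lift_between (Cells.arrows_of_homotopic m₀ tz hl.cells)
      ((tz.precomp _).comp Q.tracked_arrow_src) ((tz.precomp _).comp Q.tracked_arrow_tgt)
      (fun x => EffObj.mem_hom_of_eq (hz x.1).symm (hz x.2.1).symm (w.f1 _ _ _).prop) w.tr1)
  exact ⟨m, hmg, effHomotopic_iff_cells.2 (hl.cells.congr (fun _ => rfl) (fun _ => rfl)
    (fun q => (hm q).symm))⟩

/-! ### Canonical pullbacks -/

theorem IsPB.exists_inverse {𝒞 : Type*} [Category 𝒞] {P Q X Y Z : 𝒞} {p₁ : P ⟶ X}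
    {p₂ : P ⟶ Y} {q₁ : Q ⟶ X} {q₂ : Q ⟶ Y} {f : X ⟶ Z} {g : Y ⟶ Z}
    (hP : IsPB p₁ p₂ f g) (hQ : IsPB q₁ q₂ f g) :
    ∃ (φ : P ⟶ Q) (ψ : Q ⟶ P), φ ≫ q₁ = p₁ ∧ φ ≫ q₂ = p₂ ∧ ψ ≫ p₁ = q₁ ∧ ψ ≫ p₂ = q₂ ∧
      φ ≫ ψ = 𝟙 P ∧ ψ ≫ φ = 𝟙 Q := by
  obtain ⟨φ, ⟨e₁, e₂⟩, -⟩ := hQ.2 P p₁ p₂ hP.1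
  obtain ⟨ψ, ⟨e₃, e₄⟩, -⟩ := hP.2 Q q₁ q₂ hQ.1
  obtain ⟨_, -, hu₁⟩ := hP.2 P p₁ p₂ hP.1
  obtain ⟨_, -, hu₂⟩ := hQ.2 Q q₁ q₂ hQ.1
  refine ⟨φ, ψ, e₁, e₂, e₃, e₄, ?_, ?_⟩
  · rw [hu₁ (φ ≫ ψ) ⟨by rw [Category.assoc, e₃, e₁], by rw [Category.assoc, e₄, e₂]⟩,
      hu₁ (𝟙 P) ⟨Category.id_comp _, Category.id_comp _⟩]
  · rw [hu₂ (ψ ≫ φ) ⟨by rw [Category.assoc, e₁, e₃], by rw [Category.assoc, e₂, e₄]⟩,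
      hu₂ (𝟙 Q) ⟨Category.id_comp _, Category.id_comp _⟩]

theorem IsPB.hom_ext {𝒞 : Type*} [Category 𝒞] {P X Y Z Q : 𝒞} {p₁ : P ⟶ X} {p₂ : P ⟶ Y}
    {f : X ⟶ Z} {g : Y ⟶ Z} (hP : IsPB p₁ p₂ f g) {a b : Q ⟶ P} (h₁ : a ≫ p₁ = b ≫ p₁)
    (h₂ : a ≫ p₂ = b ≫ p₂) : a = b := by
  obtain ⟨_, -, hu⟩ := hP.2 Q (b ≫ p₁) (b ≫ p₂) (by simp only [Category.assoc, hP.1])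
  exact (hu a ⟨h₁, h₂⟩).trans (hu b ⟨rfl, rfl⟩).symm

section Pullback

variable {A B C : EffObj} (bot : C ⟶ A) (f : B ⟶ A)

def PbPt : Type := {p : C.A × B.A // bot.f0 p.1 = f.f0 p.2}

def pbHom (p q : PbPt bot f) : Set ℕ :=
  {n | ∃ (h₁ : n.unpair.1 ∈ C.hom p.val.1 q.val.1) (h₂ : n.unpair.2 ∈ B.hom p.val.2 q.val.2),
    (bot.f1 _ _ ⟨n.unpair.1, h₁⟩).val = (f.f1 _ _ ⟨n.unpair.2, h₂⟩).val}

variable {bot f}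

theorem pair_mem_pbHom {p q : PbPt bot f} {c₁ c₂ : ℕ} (h₁ : c₁ ∈ C.hom p.val.1 q.val.1)
    (h₂ : c₂ ∈ B.hom p.val.2 q.val.2)
    (he : (bot.f1 _ _ ⟨c₁, h₁⟩).val = (f.f1 _ _ ⟨c₂, h₂⟩).val) :
    Nat.pair c₁ c₂ ∈ pbHom bot f p q := by
  have e₁ : (Nat.pair c₁ c₂).unpair.1 = c₁ := by simp
  have e₂ : (Nat.pair c₁ c₂).unpair.2 = c₂ := by simp
  exact ⟨e₁.symm ▸ h₁, e₂.symm ▸ h₂, (bot.f1_congr rfl rfl _ e₁ h₁).trans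
    (he.trans (f.f1_congr rfl rfl h₂ e₂.symm _))⟩

section Cells

variable {W : Sort*} {I : W → ℕ} {u v : W → PbPt bot f}

theorem Cells.pb_fst (h : Cells (pbHom bot f) I u v) :
    Cells C.hom I (fun x => (u x).val.1) (fun x => (v x).val.1) := by
  obtain ⟨c, hc, tc⟩ := h
  exact ⟨_, fun x => (hc x).1, tc.unpair_fst⟩

theorem Cells.pb_snd (h : Cells (pbHom bot f) I u v) :
    Cells B.hom I (fun x => (u x).val.2) (fun x => (v x).val.2) := by
  obtain ⟨c, hc, tc⟩ := h
  exact ⟨_, fun x => (hc x).2.1, tc.unpair_snd⟩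

/-- The `B`-components need not lie over the images of the `C`-components: they are corrected
using that `f` is a fibration. -/
theorem Cells.pb (hf : EffFib f) (hc : Cells C.hom I (fun x => (u x).val.1) (fun x => (v x).val.1))
    (hb : Cells B.hom I (fun x => (u x).val.2) (fun x => (v x).val.2))
    (tu : CompComputes I (fun x => Nat.pair (C.α (u x).val.1) (B.α (u x).val.2)))
    (tv : CompComputes I (fun x => Nat.pair (C.α (v x).val.1) (B.α (v x).val.2))) :
    Cells (pbHom bot f) I u v := by
  obtain ⟨c₁, h₁, t₁⟩ := hc
  obtain ⟨c₂, h₂, t₂⟩ := hf.lift_between hb tu.snd tv.snd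
    (fun x => EffObj.mem_hom_of_eq (u x).prop (v x).prop (bot.f1 _ _ ⟨c₁ x, h₁ x⟩).prop)
    ((bot.tr1.precomp (fun x => ⟨(u x).val.1, (v x).val.1, ⟨c₁ x, h₁ x⟩⟩)).comp
      (tu.fst.pair (tv.fst.pair t₁)))
  exact ⟨_, fun x => pair_mem_pbHom (h₁ x) (h₂ x).1 (h₂ x).2.symm, t₁.pair t₂⟩

end Cells

variable (bot f) (hf : EffFib f)

def pbObj : EffObj :=
  .ofCells (PbPt bot f) (fun p => Nat.pair (C.α p.val.1) (B.α p.val.2)) (pbHom bot f)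
    (fun tu => Cells.pb hf (Cells.refl tu.fst) (Cells.refl tu.snd) tu tu)
    (fun tu tv h => Cells.pb hf (h.pb_fst.symm tu.fst tv.fst) (h.pb_snd.symm tu.snd tv.snd) tv tu)
    (fun tu tv tw h₁ h₂ => Cells.pb hf (h₁.pb_fst.trans tu.fst tv.fst tw.fst h₂.pb_fst)
      (h₁.pb_snd.trans tu.snd tv.snd tw.snd h₂.pb_snd) tu tw)

def pbFst : pbObj bot f hf ⟶ C where
  f0 p := p.val.1
  f1 _ _ n := ⟨n.val.unpair.1, n.prop.1⟩
  tr0 := (CompComputes.id _).fst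
  tr1 := (CompComputes.id _).snd.snd.unpair_fst

def pbSnd : pbObj bot f hf ⟶ B where
  f0 p := p.val.2
  f1 _ _ n := ⟨n.val.unpair.2, n.prop.2.1⟩
  tr0 := (CompComputes.id _).snd
  tr1 := (CompComputes.id _).snd.snd.unpair_snd

def pbLift {Q : EffObj} (q₁ : Q ⟶ C) (q₂ : Q ⟶ B) (h : q₁ ≫ bot = q₂ ≫ f) :
    Q ⟶ pbObj bot f hf where
  f0 w := ⟨(q₁.f0 w, q₂.f0 w), EffHom.congr_f0 h w⟩
  f1 w w' ρ := ⟨Nat.pair (q₁.f1 w w' ρ).val (q₂.f1 w w' ρ).val,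
    pair_mem_pbHom (q₁.f1 w w' ρ).prop (q₂.f1 w w' ρ).prop (EffHom.congr_f1 h w w' ρ)⟩
  tr0 := q₁.tr0.pair q₂.tr0
  tr1 := q₁.tr1.pair q₂.tr1

@[simp]
theorem pbLift_fst {Q : EffObj} (q₁ : Q ⟶ C) (q₂ : Q ⟶ B) (h : q₁ ≫ bot = q₂ ≫ f) :
    pbLift bot f hf q₁ q₂ h ≫ pbFst bot f hf = q₁ :=
  EffHom.ext (fun _ => rfl) (fun _ _ _ => congrArg Prod.fst (Nat.unpair_pair _ _))

@[simp]
theorem pbLift_snd {Q : EffObj} (q₁ : Q ⟶ C) (q₂ : Q ⟶ B) (h : q₁ ≫ bot = q₂ ≫ f) :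
    pbLift bot f hf q₁ q₂ h ≫ pbSnd bot f hf = q₂ :=
  EffHom.ext (fun _ => rfl) (fun _ _ _ => congrArg Prod.snd (Nat.unpair_pair _ _))

theorem pb_condition : pbFst bot f hf ≫ bot = pbSnd bot f hf ≫ f :=
  EffHom.ext (fun p => p.prop) (fun _ _ n => n.prop.2.2)

theorem pb_isPB : IsPB (pbFst bot f hf) (pbSnd bot f hf) bot f := by
  refine ⟨pb_condition bot f hf, fun Q q₁ q₂ h => ⟨pbLift bot f hf q₁ q₂ h,
    ⟨pbLift_fst bot f hf q₁ q₂ h, pbLift_snd bot f hf q₁ q₂ h⟩, ?_⟩⟩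
  · rintro k ⟨e₁, e₂⟩
    exact EffHom.ext (fun w => Subtype.ext (Prod.ext (EffHom.congr_f0 e₁ w)
      (EffHom.congr_f0 e₂ w))) (fun w w' ρ => by
        change (k.f1 w w' ρ).val = Nat.pair (q₁.f1 w w' ρ).val (q₂.f1 w w' ρ).val
        rw [← EffHom.congr_f1 e₁, ← EffHom.congr_f1 e₂]
        exact (Nat.pair_unpair _).symm)

theorem pbFst_fib : EffFib (pbFst bot f hf) := by
  refine .of_lift _ (fun {_ _ u a π} hπ hu ha tπ => ?_) (fun {_ _ u v _} hc hu hv hπ tπ => ?_)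
  · obtain ⟨b, hb, tb, c, hc, tc⟩ := hf.lift (u := fun x => (u x).val.2)
      (a := fun x => bot.f0 (a x))
      (fun x => EffObj.mem_hom_of_eq (u x).prop rfl (bot.f1 _ _ ⟨π x, hπ x⟩).prop) hu.snd
      (bot.tracked ha) ((bot.tr1.precomp (fun x => ⟨(u x).val.1, a x, ⟨π x, hπ x⟩⟩)).comp
        (hu.fst.pair (ha.pair tπ)))
    refine ⟨fun x => ⟨(a x, b x), (hb x).symm⟩, fun _ => rfl, ha.pair tb,
      fun x => Nat.pair (π x) (c x), fun x => ⟨?_, ?_⟩, tπ.pair tc⟩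
    · exact pair_mem_pbHom (hπ x) (hc x).1 (hc x).2.symm
    · exact congrArg Prod.fst (Nat.unpair_pair _ _)
  · obtain ⟨c, hc, tc⟩ := hf.lift_between hc.pb_snd hu.snd hv.snd
      (fun x => EffObj.mem_hom_of_eq (u x).prop (v x).prop (bot.f1 _ _ ⟨_, hπ x⟩).prop)
      ((bot.tr1.precomp (fun x => ⟨(u x).val.1, (v x).val.1, ⟨_, hπ x⟩⟩)).comp
        (hu.fst.pair (hv.fst.pair tπ)))
    refine ⟨fun x => Nat.pair _ (c x), fun x => ⟨?_, ?_⟩, tπ.pair tc⟩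
    · exact pair_mem_pbHom (hπ x) (hc x).1 (hc x).2.symm
    · exact congrArg Prod.fst (Nat.unpair_pair _ _)

theorem pbFst_stdDisc {s : B ⟶ A} (hs : EffStdDisc s) : EffStdDisc (pbFst bot s hs.1) := by
  refine ⟨pbFst_fib bot s hs.1, fun p q (h₀ : p.val.1 = q.val.1) hα => ?_⟩
  have hα' : Nat.pair (C.α p.val.1) (B.α p.val.2) = Nat.pair (C.α q.val.1) (B.α q.val.2) := hα
  have hα₂ : B.α p.val.2 = B.α q.val.2 := (Nat.pair_eq_pair.1 hα').2
  refine Subtype.ext (Prod.ext h₀ (hs.2 _ _ ?_ hα₂))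
  rw [← p.prop, ← q.prop, h₀]

variable {bot f hf}

theorem pb_homotopic {Q : EffObj} {H K : Q ⟶ pbObj bot f hf}
    (h₁ : EffHomotopic (H ≫ pbFst bot f hf) (K ≫ pbFst bot f hf))
    (h₂ : EffHomotopic (H ≫ pbSnd bot f hf) (K ≫ pbSnd bot f hf)) : EffHomotopic H K :=
  effHomotopic_iff_cells.2 (Cells.pb hf (effHomotopic_iff_cells.1 h₁)
    (effHomotopic_iff_cells.1 h₂) H.tr0 K.tr0)

/-- Pulling back along `bot` preserves equivalences between fibrations over `A`. -/
theorem pbLift_eqv {B₁ : EffObj} {w : B ⟶ B₁} {s : B₁ ⟶ A} (hs : EffFib s) (hw : EffEqv w)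
    (hws : w ≫ s = f) (h : pbFst bot f hf ≫ bot = (pbSnd bot f hf ≫ w) ≫ s) :
    EffEqv (pbLift bot s hs (pbFst bot f hf) (pbSnd bot f hf ≫ w) h) := by
  obtain ⟨u, hwu, huw⟩ := hw
  have huws : EffHomotopic ((pbSnd bot s hs ≫ u) ≫ f) (pbFst bot s hs ≫ bot) := by
    rw [pb_condition, ← hws]
    simpa using (huw.whiskerLeft (pbSnd bot s hs)).whiskerRight s
  obtain ⟨G, hG, hG'⟩ := hf.strictify _ _ huws
  refine ⟨pbLift bot f hf (pbFst bot s hs) G hG.symm, pb_homotopic ?_ ?_, pb_homotopic ?_ ?_⟩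
  · simp
  · calc (pbLift bot s hs (pbFst bot f hf) (pbSnd bot f hf ≫ w) h ≫
            pbLift bot f hf (pbFst bot s hs) G hG.symm) ≫ pbSnd bot f hf
          = pbLift bot s hs (pbFst bot f hf) (pbSnd bot f hf ≫ w) h ≫ G := by
          rw [Category.assoc, pbLift_snd]
      _ ≃ₕ pbLift bot s hs (pbFst bot f hf) (pbSnd bot f hf ≫ w) h ≫ pbSnd bot s hs ≫ u :=
        hG'.symm.whiskerLeft _
      _ = pbSnd bot f hf ≫ w ≫ u := by rw [← Category.assoc, pbLift_snd, Category.assoc]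
      _ ≃ₕ pbSnd bot f hf ≫ 𝟙 B := hwu.whiskerLeft _
      _ = 𝟙 _ ≫ pbSnd bot f hf := by simp
  · simp
  · calc (pbLift bot f hf (pbFst bot s hs) G hG.symm ≫
            pbLift bot s hs (pbFst bot f hf) (pbSnd bot f hf ≫ w) h) ≫ pbSnd bot s hs
          = G ≫ w := by rw [Category.assoc, pbLift_snd, ← Category.assoc, pbLift_snd]
      _ ≃ₕ (pbSnd bot s hs ≫ u) ≫ w := hG'.symm.whiskerRight w
      _ = pbSnd bot s hs ≫ u ≫ w := Category.assoc _ _ _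
      _ ≃ₕ pbSnd bot s hs ≫ 𝟙 B₁ := huw.whiskerLeft _
      _ = 𝟙 _ ≫ pbSnd bot s hs := by simp

end Pullback

theorem EffDisc.eqv_comp {X Y Z : EffObj} {e : X ⟶ Y} {d : Y ⟶ Z} (he : EffEqv e)
    (hd : EffDisc d) (hed : EffFib (e ≫ d)) : EffDisc (e ≫ d) := by
  obtain ⟨-, Y', w, s, hw, hs, rfl⟩ := hd
  exact ⟨hed, Y', e ≫ w, s, he.comp hw, hs, Category.assoc _ _ _⟩

theorem EffDisc.pullback {A B C : EffObj} {f : B ⟶ A} (hfd : EffDisc f) (bot : C ⟶ A) :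
    EffDisc (pbFst bot f hfd.1) := by
  obtain ⟨hf, B₁, w, s, hw, hs, hws⟩ := hfd
  have h : pbFst bot f hf ≫ bot = (pbSnd bot f hf ≫ w) ≫ s := by
    rw [pb_condition, Category.assoc, hws]
  exact ⟨pbFst_fib bot f hf, _, _, _, pbLift_eqv hs.1 hw hws h, pbFst_stdDisc bot hs,
    pbLift_fst _ _ _ _ _ h⟩

theorem EffDisc.of_isHomotopyPB {D C B A : EffObj} {g : D ⟶ C} {top : D ⟶ B} {f : B ⟶ A}
    {bot : C ⟶ A} (hg : EffFib g) (hfd : EffDisc f) (H : IsHomotopyPB EffPS g top f bot) :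
    EffDisc g := by
  obtain ⟨-, P, p₁, p₂, h, hP, rfl, -, hh⟩ := H
  obtain ⟨φ, ψ, hφ, -, -, -, hφψ, hψφ⟩ := hP.exists_inverse (pb_isPB bot f hfd.1)
  have e : h ≫ p₁ = (h ≫ φ) ≫ pbFst bot f hfd.1 := by rw [Category.assoc, hφ]
  rw [e] at hg ⊢
  exact EffDisc.eqv_comp (hh.comp (.of_inverse ψ hφψ hψφ)) (hfd.pullback bot) hg

/-- The standard discrete fibration `d` is the pullback of `s` along a homotopy inverse
of `v`. -/
theorem EffStdDisc.exists_eqv_comp {X Y Y' : EffObj} {s : X ⟶ Y} {v : Y ⟶ Y'}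
    (hs : EffStdDisc s) (hv : EffEqv v) :
    ∃ (X' : EffObj) (e : X ⟶ X') (d : X' ⟶ Y'), EffEqv e ∧ EffStdDisc d ∧ e ≫ d = s ≫ v := by
  obtain ⟨u, hvu, huv⟩ := hv
  have hs' : 𝟙 X ≫ s ≃ₕ s ≫ v ≫ u := by simpa using (hvu.whiskerLeft s).symm
  obtain ⟨G, hG, hG'⟩ := hs.1.strictify _ _ hs'
  have h : (s ≫ v) ≫ u = G ≫ s := by rw [hG, Category.assoc]
  refine ⟨_, pbLift u s hs.1 (s ≫ v) G h, pbFst u s hs.1,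
    ⟨pbSnd u s hs.1, ?_, pb_homotopic ?_ ?_⟩, pbFst_stdDisc u hs, pbLift_fst _ _ _ _ _ h⟩
  · rw [pbLift_snd]
    exact hG'.symm
  · calc (pbSnd u s hs.1 ≫ pbLift u s hs.1 (s ≫ v) G h) ≫ pbFst u s hs.1
          = (pbFst u s hs.1 ≫ u) ≫ v := by
          rw [Category.assoc, pbLift_fst, ← Category.assoc, ← pb_condition]
      _ ≃ₕ pbFst u s hs.1 ≫ 𝟙 Y' := by simpa using huv.whiskerLeft (pbFst u s hs.1)
      _ = 𝟙 _ ≫ pbFst u s hs.1 := by simp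
  · calc (pbSnd u s hs.1 ≫ pbLift u s hs.1 (s ≫ v) G h) ≫ pbSnd u s hs.1
          = pbSnd u s hs.1 ≫ G := by rw [Category.assoc, pbLift_snd]
      _ ≃ₕ pbSnd u s hs.1 ≫ 𝟙 X := hG'.symm.whiskerLeft _
      _ = 𝟙 _ ≫ pbSnd u s hs.1 := by simp

theorem EffDisc.comp {X Y Z : EffObj} {f : X ⟶ Y} {g : Y ⟶ Z} (hf : EffDisc f)
    (hg : EffDisc g) : EffDisc (f ≫ g) := by
  obtain ⟨hf', X', w, s, hw, hs, rfl⟩ := hf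
  obtain ⟨hg', Y', v, t, hv, ht, rfl⟩ := hg
  obtain ⟨X'', e, d, he, hd, hed⟩ := hs.exists_eqv_comp hv
  refine ⟨hf'.comp hg', X'', w ≫ e, d ≫ t, hw.comp he, hd.comp ht, ?_⟩
  simp only [Category.assoc]
  rw [← Category.assoc e, hed, Category.assoc]

/-! ### Fibrewise homotopies -/

section PathObject

variable {Z Y : EffObj} (p : Z ⟶ Y) (hp : EffFib p)

def PathPt : Type := {q : PbPt p p × ℕ // q.2 ∈ Z.hom q.1.val.1 q.1.val.2}

/-- The path object of `p` in the slice over `Y`. Its 1-cells are those of `Z ×_Y Z`: the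
chosen 1-cell between the endpoints plays no role in them. -/
def pathObj : EffObj :=
  .ofCells (PathPt p) (fun q => Nat.pair (Nat.pair (Z.α q.val.1.val.1) (Z.α q.val.1.val.2)) q.val.2)
    (fun q q' => pbHom p p q.val.1 q'.val.1)
    (fun tu => Cells.refl (A := pbObj p p hp) tu.fst)
    (fun tu tv h => Cells.symm (A := pbObj p p hp) tu.fst tv.fst h)
    (fun tu tv tw h₁ h₂ => Cells.trans (A := pbObj p p hp) tu.fst tv.fst tw.fst h₁ h₂)

def pathEndpoints : pathObj p hp ⟶ pbObj p p hp where
  f0 q := q.val.1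
  f1 _ _ n := n
  tr0 := (CompComputes.id _).fst
  tr1 := (CompComputes.id _).snd.snd

noncomputable def pathRefl : Z ⟶ pathObj p hp where
  f0 z := ⟨(⟨(z, z), rfl⟩, (Cells.refl (A := Z) (CompComputes.id Z.α)).choose z),
    (Cells.refl (A := Z) (CompComputes.id Z.α)).choose_spec.1 z⟩
  f1 _ _ ρ := ⟨Nat.pair ρ.val ρ.val, pair_mem_pbHom ρ.prop ρ.prop rfl⟩
  tr0 := ((CompComputes.id _).pair (CompComputes.id _)).pair
    (Cells.refl (A := Z) (CompComputes.id Z.α)).choose_spec.2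
  tr1 := (CompComputes.id _).snd.snd.pair (CompComputes.id _).snd.snd

theorem pathEndpoints_fib : EffFib (pathEndpoints p hp) := by
  refine .of_lift _ (fun {_ _ u a π} hπ hu ha tπ => ?_) (fun {_ _ u v π} _ _ _ hπ tπ =>
    ⟨π, fun x => ⟨hπ x, rfl⟩, tπ⟩)
  have t₁ : Tracked Z _ (fun x => (u x).val.1.val.1) := hu.fst.fst
  have t₂ : Tracked Z _ (fun x => (u x).val.1.val.2) := hu.fst.snd
  have hπ' : Cells (pbHom p p) _ (fun x => (u x).val.1) a := ⟨π, hπ, tπ⟩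
  have hu' : Cells Z.hom _ (fun x => (u x).val.1.val.1) (fun x => (u x).val.1.val.2) :=
    ⟨fun x => (u x).val.2, fun x => (u x).prop, hu.snd⟩
  obtain ⟨n, hn, tn⟩ := ((hπ'.pb_fst.symm t₁ ha.fst).trans ha.fst t₁ t₂ hu').trans
    ha.fst t₂ ha.snd hπ'.pb_snd
  exact ⟨fun x => ⟨(a x, n x), hn x⟩, fun _ => rfl, ha.pair tn, π, fun x => ⟨hπ x, rfl⟩, tπ⟩

theorem pathRefl_fst : pathRefl p hp ≫ pathEndpoints p hp ≫ pbFst p p hp = 𝟙 Z :=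
  EffHom.ext (fun _ => rfl) (fun _ _ _ => congrArg Prod.fst (Nat.unpair_pair _ _))

theorem pathRefl_snd : pathRefl p hp ≫ pathEndpoints p hp ≫ pbSnd p p hp = 𝟙 Z :=
  EffHom.ext (fun _ => rfl) (fun _ _ _ => congrArg Prod.snd (Nat.unpair_pair _ _))

theorem pathRefl_eqv : EffEqv (pathRefl p hp) := by
  refine ⟨pathEndpoints p hp ≫ pbFst p p hp, (pathRefl_fst p hp).symm ▸ .refl _, ?_⟩
  have t := CompComputes.id (pathObj p hp).α
  exact effHomotopic_iff_cells.2 (Cells.pb hp (Cells.refl t.fst.fst)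
    ⟨fun q => q.val.2, fun q => q.prop, t.snd⟩ (t.fst.fst.pair t.fst.fst) t.fst)

theorem isRelPathObj_pathObj : IsRelPathObj EffPS p (pathRefl p hp)
    (pathEndpoints p hp ≫ pbFst p p hp) (pathEndpoints p hp ≫ pbSnd p p hp) := by
  refine ⟨pathRefl_eqv p hp, pathRefl_fst p hp, pathRefl_snd p hp, ?_, _, _, _, _,
    pb_isPB p p hp, rfl, rfl, pathEndpoints_fib p hp⟩
  simp only [Category.assoc, pb_condition]

end PathObject

theorem fibHomotopic_iff {Z Y Q : EffObj} {p : Z ⟶ Y} (hp : EffFib p) (a b : Q ⟶ Z) :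
    FibHomotopic EffPS p a b ↔ a ≫ p = b ≫ p ∧ EffHomotopic a b := by
  constructor
  · rintro ⟨PX, r, s, t, ⟨⟨r', -, hr'r⟩, hrs, hrt, hst, -⟩, H, rfl, rfl⟩
    refine ⟨by simp only [Category.assoc, hst], .whiskerLeft H ?_⟩
    have hs : EffHomotopic r' s := by simpa [hrs] using hr'r.whiskerRight s
    have ht : EffHomotopic r' t := by simpa [hrt] using hr'r.whiskerRight t
    exact hs.symm.trans ht
  · rintro ⟨hab, hh⟩
    obtain ⟨c, hc, tc⟩ := effHomotopic_iff_cells.1 hh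
    refine ⟨_, _, _, _, isRelPathObj_pathObj p hp,
      ⟨fun q => ⟨(⟨(a.f0 q, b.f0 q), EffHom.congr_f0 hab q⟩, c q), hc q⟩,
        fun q q' ρ => ⟨Nat.pair (a.f1 q q' ρ).val (b.f1 q q' ρ).val,
          pair_mem_pbHom (a.f1 q q' ρ).prop (b.f1 q q' ρ).prop (EffHom.congr_f1 hab q q' ρ)⟩,
        (a.tr0.pair b.tr0).pair tc, a.tr1.pair b.tr1⟩, ?_, ?_⟩
    · exact EffHom.ext (fun _ => rfl) (fun _ _ _ => congrArg Prod.fst (Nat.unpair_pair _ _))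
    · exact EffHom.ext (fun _ => rfl) (fun _ _ _ => congrArg Prod.snd (Nat.unpair_pair _ _))

/-! ### The Π-object -/

section Pi

variable {X Y Z : EffObj} (f : Y ⟶ X) (g : Z ⟶ Y)

/-- A point of the Π-object of `g` along `f`: a section of `g` over the fibre of `f` at `x`,
with a code computing it on points and on all 1-cells of `Y` between points of the fibre. -/
structure PiPt : Type where
  x : X.A
  sec : ∀ y : Y.A, f.f0 y = x → Z.A
  code : ℕ
  sec_over : ∀ y h, g.f0 (sec y h) = y
  track0 : ∀ y h, Z.α (sec y h) ∈ evalN code.unpair.1 (Y.α y)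
  track1 : ∀ (y y' : Y.A) (h : f.f0 y = x) (h' : f.f0 y' = x) (υ : ℕ) (_ : υ ∈ Y.hom y y'),
    ∃ (ζ : ℕ) (hζ : ζ ∈ Z.hom (sec y h) (sec y' h')),
      ζ ∈ evalN code.unpair.2 (Nat.pair (Y.α y) (Nat.pair (Y.α y') υ)) ∧
      (g.f1 _ _ ⟨ζ, hζ⟩).val = υ

/-- A 1-cell `m` of the Π-object: a cell `m.unpair.1` of `X` and a code `m.unpair.2` lifting
every cell of `Y` over it to a cell of `Z` between the sections. -/
def piHom (P Q : PiPt f g) : Set ℕ :=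
  {m | m.unpair.1 ∈ X.hom P.x Q.x ∧
  ∀ (y y' : Y.A) (h : f.f0 y = P.x) (h' : f.f0 y' = Q.x) (υ : ℕ) (hυ : υ ∈ Y.hom y y'),
    (f.f1 y y' ⟨υ, hυ⟩).val = m.unpair.1 →
    ∃ (ζ : ℕ) (hζ : ζ ∈ Z.hom (P.sec y h) (Q.sec y' h')),
      ζ ∈ evalN m.unpair.2 (Nat.pair (Y.α y) (Nat.pair (Y.α y') υ)) ∧
      (g.f1 _ _ ⟨ζ, hζ⟩).val = υ}

variable {f g}

def PiPt.realizer (P : PiPt f g) : ℕ := Nat.pair (X.α P.x) P.code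

theorem PiPt.ext {P Q : PiPt f g} (hx : P.x = Q.x) (hcode : P.code = Q.code)
    (hsec : ∀ y hy hy', P.sec y hy = Q.sec y hy') : P = Q := by
  obtain ⟨x, sec, code, _, _, _⟩ := P
  obtain ⟨x', sec', code', _, _, _⟩ := Q
  obtain rfl : x = x' := hx
  obtain rfl : code = code' := hcode
  obtain rfl : sec = sec' := funext fun y => funext fun h => hsec y h h
  rfl

theorem PiPt.sec_congr {P Q : PiPt f g} {y y' : Y.A} (hPQ : P = Q) (hy : y = y')
    (h : f.f0 y = P.x) (h' : f.f0 y' = Q.x) : P.sec y h = Q.sec y' h' := by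
  subst hPQ hy
  rfl

/-- A family of 1-cells of `Y` between the fibres of `f` over `P w` and `Q w`, lying over
`ξ w`: the index over which the action of a Π-cell is computed. -/
structure PiIn {W : Type} (P Q : W → PiPt f g) (ξ : W → ℕ) : Type where
  w : W
  y : Y.A
  y' : Y.A
  υ : ℕ
  hy : f.f0 y = (P w).x
  hy' : f.f0 y' = (Q w).x
  hυ : υ ∈ Y.hom y y'
  hover : (f.f1 y y' ⟨υ, hυ⟩).val = ξ w

namespace PiIn

variable {W : Type} {P Q : W → PiPt f g} {ξ : W → ℕ}

abbrev code (I : W → ℕ) (t : PiIn P Q ξ) : ℕ :=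
  Nat.pair (I t.w) (Nat.pair (Y.α t.y) (Nat.pair (Y.α t.y') t.υ))

theorem computes_w (I : W → ℕ) : CompComputes (code I) (fun t : PiIn P Q ξ => I t.w) :=
  (CompComputes.id _).fst

theorem tracked_y (I : W → ℕ) : Tracked Y (code I) (fun t : PiIn P Q ξ => t.y) :=
  (CompComputes.id _).snd.fst

theorem tracked_y' (I : W → ℕ) : Tracked Y (code I) (fun t : PiIn P Q ξ => t.y') :=
  (CompComputes.id _).snd.snd.fst

theorem computes_υ (I : W → ℕ) : CompComputes (code I) (fun t : PiIn P Q ξ => t.υ) :=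
  (CompComputes.id _).snd.snd.snd

theorem cells (I : W → ℕ) : Cells Y.hom (code I) (fun t : PiIn P Q ξ => t.y) (fun t => t.y') :=
  ⟨_, fun t => t.hυ, computes_υ I⟩

end PiIn

section Tracking

variable {W : Type} {I : W → ℕ}

theorem exists_piCells {P Q : W → PiPt f g} {ξ : W → ℕ}
    (hξ : ∀ w, ξ w ∈ X.hom (P w).x (Q w).x) (tξ : CompComputes I ξ)
    (hζ : CellsOver g (PiIn.code I) (fun t : PiIn P Q ξ => (P t.w).sec t.y t.hy)
      (fun t => (Q t.w).sec t.y' t.hy') (fun t => t.υ)) :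
    ∃ m : W → ℕ, (∀ w, m w ∈ piHom f g (P w) (Q w)) ∧ (∀ w, (m w).unpair.1 = ξ w) ∧
      CompComputes I m := by
  obtain ⟨ζ, hζ, tζ⟩ := hζ
  obtain ⟨K, hK, hKev⟩ := tζ.smn
  refine ⟨fun w => Nat.pair (ξ w) (K (I w)), fun w => ⟨by simpa using hξ w, ?_⟩,
    fun w => by simp, tξ.pair (CompComputes.of_computable I hK)⟩
  intro y y' h h' υ hυ hover
  obtain ⟨hm, hgv⟩ := hζ ⟨w, y, y', υ, h, h', hυ, by simpa using hover⟩
  exact ⟨_, hm, by simpa using hKev ⟨w, y, y', υ, h, h', hυ, by simpa using hover⟩, hgv⟩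

theorem PiPt.tracked_sec {P : W → PiPt f g} {y : W → Y.A} (hy : ∀ w, f.f0 (y w) = (P w).x)
    (tP : CompComputes I (fun w => (P w).realizer)) (ty : Tracked Y I y) :
    Tracked Z I (fun w => (P w).sec (y w) (hy w)) :=
  CompComputes.of_evalN (tP.snd.unpair_fst.pair ty) (fun w => (P w).track0 (y w) (hy w))

theorem PiPt.cellsOver_track1 {P : W → PiPt f g} {y y' : W → Y.A}
    (hy : ∀ w, f.f0 (y w) = (P w).x) (hy' : ∀ w, f.f0 (y' w) = (P w).x)
    {υ : W → ℕ} (hυ : ∀ w, υ w ∈ Y.hom (y w) (y' w))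
    (tP : CompComputes I (fun w => (P w).realizer)) (ty : Tracked Y I y) (ty' : Tracked Y I y')
    (tυ : CompComputes I υ) :
    CellsOver g I (fun w => (P w).sec (y w) (hy w)) (fun w => (P w).sec (y' w) (hy' w)) υ := by
  choose ζ hz hev hgv using fun w => (P w).track1 (y w) (y' w) (hy w) (hy' w) (υ w) (hυ w)
  exact ⟨ζ, fun w => ⟨hz w, hgv w⟩,
    CompComputes.of_evalN (tP.snd.unpair_snd.pair (ty.pair (ty'.pair tυ))) hev⟩

theorem piHom.cellsOver {P Q : W → PiPt f g} {m : W → ℕ}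
    (hm : ∀ w, m w ∈ piHom f g (P w) (Q w)) (tm : CompComputes I m)
    {y y' : W → Y.A} (hy : ∀ w, f.f0 (y w) = (P w).x) (hy' : ∀ w, f.f0 (y' w) = (Q w).x)
    {υ : W → ℕ}
    (hυ : ∀ w, ∃ h : υ w ∈ Y.hom (y w) (y' w), (f.f1 _ _ ⟨υ w, h⟩).val = (m w).unpair.1)
    (ty : Tracked Y I y) (ty' : Tracked Y I y') (tυ : CompComputes I υ) :
    CellsOver g I (fun w => (P w).sec (y w) (hy w)) (fun w => (Q w).sec (y' w) (hy' w)) υ := by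
  choose ζ hz hev hgv using fun w =>
    (hm w).2 (y w) (y' w) (hy w) (hy' w) (υ w) (hυ w).1 (hυ w).2
  exact ⟨ζ, fun w => ⟨hz w, hgv w⟩,
    CompComputes.of_evalN (tm.unpair_snd.pair (ty.pair (ty'.pair tυ))) hev⟩

end Tracking

end Pi

section PiObj

variable {X Y Z : EffObj} {f : Y ⟶ X} {g : Z ⟶ Y} {W : Type} {I : W → ℕ}

theorem piCells_refl {P : W → PiPt f g} (tP : CompComputes I (fun w => (P w).realizer)) :
    Cells (piHom f g) I P P := by
  obtain ⟨c, hc, tc⟩ := Cells.refl (A := X) (u := fun w => (P w).x) tP.fst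
  refine ⟨fun w => Nat.pair (c w) (P w).code.unpair.2, fun w => ⟨by simpa using hc w, ?_⟩,
    tc.pair tP.snd.unpair_snd⟩
  intro y y' h h' υ hυ _
  obtain ⟨ζ, hζ, hev, hgv⟩ := (P w).track1 y y' h h' υ hυ
  exact ⟨ζ, hζ, by simpa using hev, hgv⟩

variable (hf : EffFib f) (hg : EffFib g)
include hf hg

theorem piCells_symm {P Q : W → PiPt f g} (tP : CompComputes I (fun w => (P w).realizer))
    (tQ : CompComputes I (fun w => (Q w).realizer)) (h : Cells (piHom f g) I P Q) :
    Cells (piHom f g) I Q P := by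
  obtain ⟨m, hm, tm⟩ := h
  obtain ⟨ξ, hξ, tξ⟩ := Cells.symm tP.fst tQ.fst
    (⟨_, fun w => (hm w).1, tm.unpair_fst⟩ : Cells X.hom I (fun w => (P w).x) (fun w => (Q w).x))
  have tm' := (tm.precomp PiIn.w).comp (PiIn.computes_w (P := Q) (Q := P) (ξ := ξ) I)
  have ty := PiIn.tracked_y (P := Q) (Q := P) (ξ := ξ) I
  have ty' := PiIn.tracked_y' (P := Q) (Q := P) (ξ := ξ) I
  -- invert `υ`, correct it to lie over the cell of `m`, apply `m`, invert back and correct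
  obtain ⟨υ₀, hυ₀, tυ₀⟩ := hf.lift_between ((PiIn.cells I).symm ty ty') ty' ty
    (fun t => EffObj.mem_hom_of_eq t.hy'.symm t.hy.symm (hm t.w).1) tm'.unpair_fst
  have hζ₀ := piHom.cellsOver (fun t => hm t.w) tm' (fun t => t.hy') (fun t => t.hy) hυ₀
    ty' ty tυ₀
  have ts := PiPt.tracked_sec (P := fun t : PiIn Q P ξ => Q t.w) (fun t => t.hy)
    ((tQ.precomp PiIn.w).comp (PiIn.computes_w I)) ty
  have ts' := PiPt.tracked_sec (P := fun t : PiIn Q P ξ => P t.w) (fun t => t.hy')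
    ((tP.precomp PiIn.w).comp (PiIn.computes_w I)) ty'
  have hζ := hg.lift_between (hζ₀.cells.symm ts' ts) ts ts'
    (fun t => EffObj.mem_hom_of_eq ((Q t.w).sec_over _ _).symm ((P t.w).sec_over _ _).symm t.hυ)
    (PiIn.computes_υ I)
  obtain ⟨m', hm', -, tm'⟩ := exists_piCells hξ tξ hζ
  exact ⟨m', hm', tm'⟩

theorem piCells_trans {P Q R : W → PiPt f g} (tP : CompComputes I (fun w => (P w).realizer))
    (tQ : CompComputes I (fun w => (Q w).realizer)) (tR : CompComputes I (fun w => (R w).realizer))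
    (h₁ : Cells (piHom f g) I P Q) (h₂ : Cells (piHom f g) I Q R) :
    Cells (piHom f g) I P R := by
  obtain ⟨m₁, hm₁, tm₁⟩ := h₁
  obtain ⟨m₂, hm₂, tm₂⟩ := h₂
  obtain ⟨ξ, hξ, tξ⟩ := Cells.trans tP.fst tQ.fst tR.fst
    (⟨_, fun w => (hm₁ w).1, tm₁.unpair_fst⟩ : Cells X.hom I (fun w => (P w).x) (fun w => (Q w).x))
    (⟨_, fun w => (hm₂ w).1, tm₂.unpair_fst⟩ : Cells X.hom I (fun w => (Q w).x) (fun w => (R w).x))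
  have tw := PiIn.computes_w (P := P) (Q := R) (ξ := ξ) I
  have tm₁' := (tm₁.precomp PiIn.w).comp tw
  have tm₂' := (tm₂.precomp PiIn.w).comp tw
  have ty := PiIn.tracked_y (P := P) (Q := R) (ξ := ξ) I
  have ty' := PiIn.tracked_y' (P := P) (Q := R) (ξ := ξ) I
  -- split `υ` as a lift of the first cell followed by a cell `μ` over the second
  obtain ⟨y₁, hy₁, ty₁, hl⟩ := hf.lift (a := fun t : PiIn P R ξ => (Q t.w).x)
    (fun t => EffObj.mem_hom_of_eq t.hy.symm rfl (hm₁ t.w).1) ty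
    ((tQ.precomp PiIn.w).comp tw).fst tm₁'.unpair_fst
  obtain ⟨μ, hμ, tμ⟩ := hf.lift_between
    ((hl.cells.symm ty ty₁).trans ty₁ ty ty' (PiIn.cells I)) ty₁ ty'
    (fun t => EffObj.mem_hom_of_eq (hy₁ t).symm t.hy'.symm (hm₂ t.w).1) tm₂'.unpair_fst
  obtain ⟨l, hl, tl⟩ := hl
  have hζ₁ := piHom.cellsOver (fun t => hm₁ t.w) tm₁' (fun t => t.hy) hy₁ hl ty ty₁ tl
  have hζ₂ := piHom.cellsOver (fun t => hm₂ t.w) tm₂' hy₁ (fun t => t.hy') hμ ty₁ ty' tμ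
  have ts := PiPt.tracked_sec (P := fun t : PiIn P R ξ => P t.w) (fun t => t.hy)
    ((tP.precomp PiIn.w).comp tw) ty
  have ts₁ := PiPt.tracked_sec (P := fun t : PiIn P R ξ => Q t.w) hy₁
    ((tQ.precomp PiIn.w).comp tw) ty₁
  have ts' := PiPt.tracked_sec (P := fun t : PiIn P R ξ => R t.w) (fun t => t.hy')
    ((tR.precomp PiIn.w).comp tw) ty'
  have hζ := hg.lift_between (hζ₁.cells.trans ts ts₁ ts' hζ₂.cells) ts ts'
    (fun t => EffObj.mem_hom_of_eq ((P t.w).sec_over _ _).symm ((R t.w).sec_over _ _).symm t.hυ)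
    (PiIn.computes_υ I)
  obtain ⟨m, hm, -, tm⟩ := exists_piCells hξ tξ hζ
  exact ⟨m, hm, tm⟩

def piObj : EffObj :=
  .ofCells (PiPt f g) PiPt.realizer (piHom f g) piCells_refl (piCells_symm hf hg)
    (piCells_trans hf hg)

def piProj : piObj hf hg ⟶ X where
  f0 P := P.x
  f1 _ _ m := ⟨m.val.unpair.1, m.prop.1⟩
  tr0 := (CompComputes.id _).fst
  tr1 := (CompComputes.id _).snd.snd.unpair_fst

end PiObj

section PiFib

variable {X Y Z : EffObj} {f : Y ⟶ X} {g : Z ⟶ Y} {W : Type}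

structure FibrePt (f : Y ⟶ X) (x : W → X.A) : Type where
  w : W
  y : Y.A
  hy : f.f0 y = x w

structure FibreArrow (f : Y ⟶ X) (x : W → X.A) : Type where
  w : W
  y : Y.A
  y' : Y.A
  υ : ℕ
  hy : f.f0 y = x w
  hy' : f.f0 y' = x w
  hυ : υ ∈ Y.hom y y'

abbrev FibrePt.code {x : W → X.A} (I : W → ℕ) (t : FibrePt f x) : ℕ :=
  Nat.pair (I t.w) (Y.α t.y)

abbrev FibreArrow.code {x : W → X.A} (I : W → ℕ) (t : FibreArrow f x) : ℕ :=
  Nat.pair (I t.w) (Nat.pair (Y.α t.y) (Nat.pair (Y.α t.y') t.υ))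

namespace FibreArrow

variable {x : W → X.A}

def src (t : FibreArrow f x) : FibrePt f x := ⟨t.w, t.y, t.hy⟩

def tgt (t : FibreArrow f x) : FibrePt f x := ⟨t.w, t.y', t.hy'⟩

variable (I : W → ℕ)

theorem computes_w : CompComputes (code I) (fun t : FibreArrow f x => I t.w) :=
  (CompComputes.id _).fst

theorem computes_src : CompComputes (code I) (fun t : FibreArrow f x => FibrePt.code I t.src) :=
  (CompComputes.id _).fst.pair (CompComputes.id _).snd.fst

theorem computes_tgt : CompComputes (code I) (fun t : FibreArrow f x => FibrePt.code I t.tgt) :=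
  (CompComputes.id _).fst.pair (CompComputes.id _).snd.snd.fst

theorem tracked_y : Tracked Y (code I) (fun t : FibreArrow f x => t.y) :=
  (CompComputes.id _).snd.fst

theorem tracked_y' : Tracked Y (code I) (fun t : FibreArrow f x => t.y') :=
  (CompComputes.id _).snd.snd.fst

theorem computes_υ : CompComputes (code I) (fun t : FibreArrow f x => t.υ) :=
  (CompComputes.id _).snd.snd.snd

theorem cells : Cells Y.hom (code I) (fun t : FibreArrow f x => t.y) (fun t => t.y') :=
  ⟨_, fun t => t.hυ, computes_υ I⟩

end FibreArrow

theorem exists_piPt {I : W → ℕ} {x : W → X.A} (tx : Tracked X I x)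
    (sec : ∀ w y, f.f0 y = x w → Z.A) (sec_over : ∀ w y h, g.f0 (sec w y h) = y)
    (tsec : Tracked Z (FibrePt.code I) (fun t : FibrePt f x => sec t.w t.y t.hy))
    (csec : CellsOver g (FibreArrow.code I) (fun t : FibreArrow f x => sec t.w t.y t.hy)
      (fun t => sec t.w t.y' t.hy') (fun t => t.υ)) :
    ∃ P : W → PiPt f g, (∀ w, (P w).x = x w) ∧ (∀ w y h h', (P w).sec y h = sec w y h') ∧
      CompComputes I (fun w => (P w).realizer) := by
  obtain ⟨K₀, hK₀, hK₀ev⟩ := tsec.smn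
  obtain ⟨ζ, hζ, tζ⟩ := csec
  obtain ⟨K₁, hK₁, hK₁ev⟩ := tζ.smn
  refine ⟨fun w => ⟨x w, sec w, Nat.pair (K₀ (I w)) (K₁ (I w)), sec_over w,
    fun y h => by simpa using hK₀ev ⟨w, y, h⟩, fun y y' h h' υ hυ => ?_⟩,
    fun _ => rfl, fun _ _ _ _ => rfl,
    tx.pair ((CompComputes.of_computable I hK₀).pair (CompComputes.of_computable I hK₁))⟩
  obtain ⟨hz, hgz⟩ := hζ ⟨w, y, y', υ, h, h', hυ⟩
  exact ⟨_, hz, by simpa using hK₁ev ⟨w, y, y', υ, h, h', hυ⟩, hgz⟩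

theorem piProj_lift_between (hf : EffFib f) (hg : EffFib g) {I : W → ℕ} {u v : W → PiPt f g}
    {π : W → ℕ} (h : Cells (piHom f g) I u v) (tu : CompComputes I (fun w => (u w).realizer))
    (tv : CompComputes I (fun w => (v w).realizer)) (hπ : ∀ w, π w ∈ X.hom (u w).x (v w).x)
    (tπ : CompComputes I π) :
    ∃ m : W → ℕ, (∀ w, m w ∈ piHom f g (u w) (v w)) ∧ (∀ w, (m w).unpair.1 = π w) ∧
      CompComputes I m := by
  obtain ⟨m, hm, tm⟩ := h
  have tw := PiIn.computes_w (P := u) (Q := v) (ξ := π) I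
  have tm' := (tm.precomp PiIn.w).comp tw
  have ty := PiIn.tracked_y (P := u) (Q := v) (ξ := π) I
  have ty' := PiIn.tracked_y' (P := u) (Q := v) (ξ := π) I
  obtain ⟨υ, hυ, tυ⟩ := hf.lift_between (PiIn.cells I) ty ty'
    (fun t => EffObj.mem_hom_of_eq t.hy.symm t.hy'.symm (hm t.w).1) tm'.unpair_fst
  have hζ := piHom.cellsOver (fun t => hm t.w) tm' (fun t => t.hy) (fun t => t.hy') hυ ty ty' tυ
  refine exists_piCells hπ tπ (hg.lift_between hζ.cells
    (PiPt.tracked_sec _ ((tu.precomp PiIn.w).comp tw) ty)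
    (PiPt.tracked_sec _ ((tv.precomp PiIn.w).comp tw) ty') ?_ (PiIn.computes_υ I))
  exact fun t => EffObj.mem_hom_of_eq ((u t.w).sec_over _ _).symm ((v t.w).sec_over _ _).symm t.hυ

/-- Transport of the section of `u w` along `π w : (u w).x → a w`: a point `y` over `a w` is
joined to a point `y₀` over `(u w).x`, and the section at `y₀` is lifted back along `g` to a
point `z` over `y`. -/
theorem exists_fibre_transport (hf : EffFib f) (hg : EffFib g) {I : W → ℕ} {u : W → PiPt f g}
    {a : W → X.A} {π : W → ℕ}
    (hπ : ∀ w, π w ∈ X.hom (u w).x (a w)) (tu : CompComputes I (fun w => (u w).realizer))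
    (ta : Tracked X I a) (tπ : CompComputes I π) :
    ∃ (y₀ : FibrePt f a → Y.A) (hy₀ : ∀ t, f.f0 (y₀ t) = (u t.w).x) (z : FibrePt f a → Z.A),
      (∀ t, g.f0 (z t) = t.y) ∧ Tracked Y (FibrePt.code I) y₀ ∧ Tracked Z (FibrePt.code I) z ∧
      Cells Y.hom (FibrePt.code I) (fun t => t.y) y₀ ∧
      Cells Z.hom (FibrePt.code I) (fun t => (u t.w).sec (y₀ t) (hy₀ t)) z := by
  have tw : CompComputes (FibrePt.code I) (fun t : FibrePt f a => I t.w) := (CompComputes.id _).fst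
  have ty : Tracked Y (FibrePt.code I) (fun t : FibrePt f a => t.y) := (CompComputes.id _).snd
  have tu' := (tu.precomp FibrePt.w).comp tw
  obtain ⟨ξ, hξ, tξ⟩ := Cells.symm tu.fst ta ⟨π, hπ, tπ⟩
  obtain ⟨y₀, hy₀, ty₀, hl⟩ := hf.lift (u := fun t : FibrePt f a => t.y)
    (a := fun t => (u t.w).x) (π := fun t => ξ t.w)
    (fun t => EffObj.mem_hom_of_eq t.hy.symm rfl (hξ t.w)) ty tu'.fst ((tξ.precomp _).comp tw)
  have ts := PiPt.tracked_sec hy₀ tu' ty₀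
  obtain ⟨μ, hμ, tμ⟩ := hl.cells.symm ty ty₀
  obtain ⟨z, hz, tz, hk⟩ := hg.lift (u := fun t : FibrePt f a => (u t.w).sec (y₀ t) (hy₀ t))
    (fun t => EffObj.mem_hom_of_eq ((u t.w).sec_over _ _).symm rfl (hμ t)) ts ty tμ
  exact ⟨y₀, hy₀, z, hz, ty₀, tz, hl.cells, hk.cells⟩

/-- The transported sections act on 1-cells by conjugating the action of `u w` with the
transport. -/
theorem transport_cellsOver (hg : EffFib g) {I : W → ℕ} {u : W → PiPt f g} {a : W → X.A}
    (tu : CompComputes I (fun w => (u w).realizer)) {y₀ : FibrePt f a → Y.A}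
    (hy₀ : ∀ t, f.f0 (y₀ t) = (u t.w).x) (ty₀ : Tracked Y (FibrePt.code I) y₀)
    (hl : Cells Y.hom (FibrePt.code I) (fun t => t.y) y₀) {z : FibrePt f a → Z.A}
    (hz : ∀ t, g.f0 (z t) = t.y) (tz : Tracked Z (FibrePt.code I) z)
    (hk : Cells Z.hom (FibrePt.code I) (fun t => (u t.w).sec (y₀ t) (hy₀ t)) z) :
    CellsOver g (FibreArrow.code I) (fun t : FibreArrow f a => z t.src) (fun t => z t.tgt)
      (fun t => t.υ) := by
  have ty := FibreArrow.tracked_y (f := f) (x := a) I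
  have ty' := FibreArrow.tracked_y' (f := f) (x := a) I
  have tu' : CompComputes (FibreArrow.code I) (fun t : FibreArrow f a => (u t.w).realizer) :=
    (tu.precomp _).comp (FibreArrow.computes_w I)
  have ty₀a := (ty₀.precomp FibreArrow.src).comp (FibreArrow.computes_src I)
  have ty₀b := (ty₀.precomp FibreArrow.tgt).comp (FibreArrow.computes_tgt I)
  have hla := (hl.precomp FibreArrow.src).comp (FibreArrow.computes_src I)
  have hlb := (hl.precomp FibreArrow.tgt).comp (FibreArrow.computes_tgt I)
  obtain ⟨c, hc, tc⟩ := ((hla.symm ty ty₀a).trans ty₀a ty ty' (FibreArrow.cells I)).trans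
    ty₀a ty' ty₀b hlb
  have h₁ := PiPt.cellsOver_track1 (P := fun t => u t.w) (fun t => hy₀ t.src)
    (fun t => hy₀ t.tgt) hc tu' ty₀a ty₀b tc
  have tsa := PiPt.tracked_sec (P := fun t => u t.w) (fun t => hy₀ t.src) tu' ty₀a
  have tsb := PiPt.tracked_sec (P := fun t => u t.w) (fun t => hy₀ t.tgt) tu' ty₀b
  have tza := (tz.precomp FibreArrow.src).comp (FibreArrow.computes_src I)
  have tzb := (tz.precomp FibreArrow.tgt).comp (FibreArrow.computes_tgt I)
  have hka := (hk.precomp FibreArrow.src).comp (FibreArrow.computes_src I)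
  have hkb := (hk.precomp FibreArrow.tgt).comp (FibreArrow.computes_tgt I)
  exact hg.lift_between (((hka.symm tsa tza).trans tza tsa tsb h₁.cells).trans tza tsb tzb hkb)
    tza tzb (fun t => EffObj.mem_hom_of_eq (hz _).symm (hz _).symm t.hυ)
    (FibreArrow.computes_υ I)

theorem piProj_lift (hf : EffFib f) (hg : EffFib g) {I : W → ℕ} {u : W → PiPt f g} {a : W → X.A}
    {π : W → ℕ}
    (hπ : ∀ w, π w ∈ X.hom (u w).x (a w)) (tu : CompComputes I (fun w => (u w).realizer))
    (ta : Tracked X I a) (tπ : CompComputes I π) :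
    ∃ v : W → PiPt f g, (∀ w, (v w).x = a w) ∧ CompComputes I (fun w => (v w).realizer) ∧
      ∃ m : W → ℕ, (∀ w, m w ∈ piHom f g (u w) (v w)) ∧ (∀ w, (m w).unpair.1 = π w) ∧
        CompComputes I m := by
  obtain ⟨y₀, hy₀, z, hz, ty₀, tz, hl, hk⟩ := exists_fibre_transport hf hg hπ tu ta tπ
  obtain ⟨v, hvx, hvsec, tv⟩ := exists_piPt ta (fun w y h => z ⟨w, y, h⟩) (fun w y h => hz _)
    tz (transport_cellsOver hg tu hy₀ ty₀ hl hz tz hk)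
  refine ⟨v, hvx, tv, exists_piCells (fun w => hvx w ▸ hπ w) tπ ?_⟩
  -- the connecting cell: follow `υ` by the transport of its target, act by `u w`, lift back
  let vc : PiIn u v π → FibrePt f a := fun t => ⟨t.w, t.y', t.hy'.trans (hvx t.w)⟩
  have tvc : CompComputes (PiIn.code I) (fun t => FibrePt.code I (vc t)) :=
    (CompComputes.id _).fst.pair (CompComputes.id _).snd.snd.fst
  have tw := PiIn.computes_w (P := u) (Q := v) (ξ := π) I
  have ty := PiIn.tracked_y (P := u) (Q := v) (ξ := π) I
  have ty' := PiIn.tracked_y' (P := u) (Q := v) (ξ := π) I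
  have tu' := (tu.precomp PiIn.w).comp tw
  have ty₀c := (ty₀.precomp vc).comp tvc
  obtain ⟨c, hc, tc⟩ := (PiIn.cells I).trans ty ty' ty₀c ((hl.precomp vc).comp tvc)
  have h₁ := PiPt.cellsOver_track1 (P := fun t => u t.w) (fun t => t.hy) (fun t => hy₀ (vc t))
    hc tu' ty ty₀c tc
  have ts := PiPt.tracked_sec (P := fun t => u t.w) (fun t => t.hy) tu' ty
  have tsc := PiPt.tracked_sec (P := fun t => u t.w) (fun t => hy₀ (vc t)) tu' ty₀c
  have tzc := (tz.precomp vc).comp tvc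
  have hζ := (h₁.cells.trans ts tsc tzc ((hk.precomp vc).comp tvc)).congr (fun _ => rfl)
    (fun _ => rfl) (fun t => (hvsec t.w t.y' t.hy' _).symm)
  refine hg.lift_between hζ ts (PiPt.tracked_sec _ ((tv.precomp PiIn.w).comp tw) ty') ?_
    (PiIn.computes_υ I)
  exact fun t => EffObj.mem_hom_of_eq ((u t.w).sec_over _ _).symm ((v t.w).sec_over _ _).symm t.hυ

theorem piProj_fib (hf : EffFib f) (hg : EffFib g) : EffFib (piProj hf hg) := by
  refine .of_lift _ (fun {_ _ _ _ _} hπ hu ha tπ => ?_) (fun {_ _ _ _ _} h hu hv hπ tπ => ?_)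
  · obtain ⟨v, hvx, tv, m, hm, hm₁, tm⟩ := piProj_lift hf hg hπ hu ha tπ
    exact ⟨v, hvx, tv, m, fun w => ⟨hm w, hm₁ w⟩, tm⟩
  · obtain ⟨m, hm, hm₁, tm⟩ := piProj_lift_between hf hg h hu hv hπ tπ
    exact ⟨m, fun w => ⟨hm w, hm₁ w⟩, tm⟩

end PiFib

section PiCounit

variable {X Y Z : EffObj} {f : Y ⟶ X} {g : Z ⟶ Y}

theorem piProj_stdDisc (hf : EffFib f) (hg : EffStdDisc g) : EffStdDisc (piProj hf hg.1) := by
  refine ⟨piProj_fib hf hg.1, fun P Q (hx : P.x = Q.x) hα => ?_⟩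
  have hcode : P.code = Q.code := (Nat.pair_eq_pair.1 (show P.realizer = Q.realizer from hα)).2
  refine PiPt.ext hx hcode (fun y hy hy' => hg.2 _ _ ?_ ?_)
  · rw [P.sec_over, Q.sec_over]
  · exact Part.mem_unique (P.track0 y hy) (hcode ▸ Q.track0 y hy')

variable (hf : EffFib f) (hg : EffFib g)

theorem exists_piEps : ∃ ε : pbObj (piProj hf hg) f hf ⟶ Z,
    (∀ p, ε.f0 p = p.val.1.sec p.val.2 p.prop.symm) ∧ ε ≫ g = pbSnd (piProj hf hg) f hf := by
  let Q := pbObj (piProj hf hg) f hf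
  have t := CompComputes.id Q.α
  have ta := CompComputes.id Q.arrowCode
  refine EffHom.exists_of_cellsOver _ (fun p => p.val.1.sec_over _ _)
    (PiPt.tracked_sec (P := fun p : Q.A => p.val.1) (fun p => p.prop.symm) t.fst t.snd) ?_
  exact piHom.cellsOver (P := fun x : Q.Arrow => x.1.val.1) (fun x => x.2.2.prop.1)
    ta.snd.snd.unpair_fst (fun x => x.1.prop.symm) (fun x => x.2.1.prop.symm)
    (fun x => ⟨x.2.2.prop.2.1, x.2.2.prop.2.2.symm⟩) ta.fst.snd ta.snd.fst.snd
    ta.snd.snd.unpair_snd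

end PiCounit

section PiUniversal

variable {X Y Z : EffObj} {f : Y ⟶ X} {g : Z ⟶ Y} (hf : EffFib f) (hg : EffFib g)

include hg in
/-- `m` acts on the 1-cells `υ` inside the fibres of `f` through the cells `(1, υ)` of the
pullback. -/
theorem cellsOver_fibreArrow {A : EffObj} (h : A ⟶ X) (m : pbObj h f hf ⟶ Z)
    (hm : m ≫ g = pbSnd h f hf) :
    CellsOver g (FibreArrow.code A.α) (fun t : FibreArrow f h.f0 => m.f0 ⟨(t.w, t.y), t.hy.symm⟩)
      (fun t => m.f0 ⟨(t.w, t.y'), t.hy'.symm⟩) (fun t => t.υ) := by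
  have hmg : ∀ p, g.f0 (m.f0 p) = p.val.2 := EffHom.congr_f0 hm
  have tw := FibreArrow.computes_w (f := f) (x := h.f0) A.α
  have ty := FibreArrow.tracked_y (f := f) (x := h.f0) A.α
  have ty' := FibreArrow.tracked_y' (f := f) (x := h.f0) A.α
  obtain ⟨i, hi, ti⟩ := Cells.refl (A := A) tw
  obtain ⟨υ, hυ, tυ⟩ := hf.lift_between (FibreArrow.cells A.α) ty ty'
    (π := fun t : FibreArrow f h.f0 => (h.f1 t.w t.w ⟨i t, hi t⟩).val)
    (fun t => EffObj.mem_hom_of_eq t.hy.symm t.hy'.symm (h.f1 _ _ _).prop)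
    ((h.tr1.precomp (fun t : FibreArrow f h.f0 => ⟨t.w, t.w, ⟨i t, hi t⟩⟩)).comp
      (tw.pair (tw.pair ti)))
  have hc : Cells (pbObj h f hf).hom (FibreArrow.code A.α)
      (fun t : FibreArrow f h.f0 => ⟨(t.w, t.y), t.hy.symm⟩)
      (fun t => ⟨(t.w, t.y'), t.hy'.symm⟩) :=
    ⟨_, fun t => pair_mem_pbHom (hi t) (hυ t).1 (hυ t).2.symm, ti.pair tυ⟩
  have tp : Tracked (pbObj h f hf) (FibreArrow.code A.α)
      (fun t : FibreArrow f h.f0 => ⟨(t.w, t.y), t.hy.symm⟩) := tw.pair ty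
  have tp' : Tracked (pbObj h f hf) (FibreArrow.code A.α)
      (fun t : FibreArrow f h.f0 => ⟨(t.w, t.y'), t.hy'.symm⟩) := tw.pair ty'
  exact hg.lift_between (hc.map m tp tp') (m.tracked tp) (m.tracked tp')
    (fun t => EffObj.mem_hom_of_eq (hmg _).symm (hmg _).symm t.hυ) (FibreArrow.computes_υ _)

theorem exists_piTranspose {A : EffObj} (h : A ⟶ X) (m : pbObj h f hf ⟶ Z)
    (hm : m ≫ g = pbSnd h f hf) :
    ∃ M : A ⟶ piObj hf hg, M ≫ piProj hf hg = h ∧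
      ∀ a y hy (hy' : h.f0 a = f.f0 y), (M.f0 a).sec y hy = m.f0 ⟨(a, y), hy'⟩ := by
  have hmg : ∀ p, g.f0 (m.f0 p) = p.val.2 := EffHom.congr_f0 hm
  obtain ⟨P, hPx, hPsec, tP⟩ := exists_piPt (h.tracked (CompComputes.id _))
    (fun a y hy => m.f0 ⟨(a, y), hy.symm⟩) (fun _ _ _ => hmg _) (m.tracked (CompComputes.id _))
    (cellsOver_fibreArrow hf hg h m hm)
  -- on a cell `υ` over `h γ`, act by `m` on the cell `(γ, υ)` of the pullback
  let p : PiIn (fun x : A.Arrow => P x.1) (fun x => P x.2.1)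
      (fun x => (h.f1 x.1 x.2.1 x.2.2).val) → PbPt h f :=
    fun t => ⟨(t.w.1, t.y), (t.hy.trans (hPx _)).symm⟩
  let p' : PiIn (fun x : A.Arrow => P x.1) (fun x => P x.2.1)
      (fun x => (h.f1 x.1 x.2.1 x.2.2).val) → PbPt h f :=
    fun t => ⟨(t.w.2.1, t.y'), (t.hy'.trans (hPx _)).symm⟩
  have hc : ∀ t, Nat.pair t.w.2.2.val t.υ ∈ pbHom h f (p t) (p' t) :=
    fun t => pair_mem_pbHom t.w.2.2.prop t.hυ t.hover.symm
  have tw := PiIn.computes_w (P := fun x : A.Arrow => P x.1) (Q := fun x => P x.2.1)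
    (ξ := fun x => (h.f1 x.1 x.2.1 x.2.2).val) A.arrowCode
  have tp : Tracked (pbObj h f hf) _ p := tw.fst.pair (PiIn.tracked_y _)
  have tp' : Tracked (pbObj h f hf) _ p' := tw.snd.fst.pair (PiIn.tracked_y' _)
  have hζ : CellsOver g (PiIn.code A.arrowCode) (fun t => m.f0 (p t)) (fun t => m.f0 (p' t))
      (fun t => t.υ) :=
    ⟨fun t => (m.f1 (p t) (p' t) ⟨_, hc t⟩).val, fun t => ⟨(m.f1 _ _ _).prop,
      (EffHom.congr_f1 hm _ _ ⟨_, hc t⟩).trans (congrArg Prod.snd (Nat.unpair_pair _ _))⟩,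
      (m.tr1.precomp (fun t => ⟨p t, p' t, ⟨_, hc t⟩⟩)).comp
        (tp.pair (tp'.pair (tw.snd.snd.pair (PiIn.computes_υ _))))⟩
  rw [← funext fun t => hPsec t.w.1 t.y t.hy (p t).prop.symm,
    ← funext fun t => hPsec t.w.2.1 t.y' t.hy' (p' t).prop.symm] at hζ
  obtain ⟨c, hc, hc₁, tc⟩ := exists_piCells
    (fun x => EffObj.mem_hom_of_eq (hPx x.1).symm (hPx x.2.1).symm (h.f1 x.1 x.2.1 x.2.2).prop)
    h.tr1 hζ
  exact ⟨⟨P, fun a a' γ => ⟨c ⟨a, a', γ⟩, hc ⟨a, a', γ⟩⟩, tP, tc⟩,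
    EffHom.ext hPx (fun a a' γ => hc₁ ⟨a, a', γ⟩), fun a y hy hy' => hPsec a y hy hy'.symm⟩

theorem piHomotopic_of_sec {A : EffObj} {h : A ⟶ X} {M M' : A ⟶ piObj hf hg}
    (hM : ∀ a, (M.f0 a).x = h.f0 a) (hM' : ∀ a, (M'.f0 a).x = h.f0 a)
    (H : Cells Z.hom (pbObj h f hf).α
      (fun p => (M.f0 p.val.1).sec p.val.2 (p.prop.symm.trans (hM _).symm))
      (fun p => (M'.f0 p.val.1).sec p.val.2 (p.prop.symm.trans (hM' _).symm))) :
    EffHomotopic M M' := by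
  obtain ⟨i, hi, ti⟩ := Cells.refl ((piProj hf hg).tracked M.tr0)
  have hi' : ∀ a, i a ∈ X.hom (M.f0 a).x (M'.f0 a).x :=
    fun a => EffObj.mem_hom_of_eq rfl ((hM a).trans (hM' a).symm) (hi a)
  have tw := PiIn.computes_w (P := M.f0) (Q := M'.f0) (ξ := i) A.α
  have ty := PiIn.tracked_y (P := M.f0) (Q := M'.f0) (ξ := i) A.α
  have ty' := PiIn.tracked_y' (P := M.f0) (Q := M'.f0) (ξ := i) A.α
  have hy : ∀ t : PiIn M.f0 M'.f0 i, f.f0 t.y = (M'.f0 t.w).x :=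
    fun t => t.hy.trans ((hM _).trans (hM' _).symm)
  -- compare the sections at `y`, then let `M'` act on `υ`
  have H' := (H.precomp (fun t : PiIn M.f0 M'.f0 i => ⟨(t.w, t.y), (t.hy.trans (hM _)).symm⟩)).comp
    (tw.pair ty)
  have ts := PiPt.tracked_sec (fun t => t.hy) ((M.tr0.precomp _).comp tw) ty
  have ts₁ := PiPt.tracked_sec hy ((M'.tr0.precomp _).comp tw) ty
  have ts' := PiPt.tracked_sec (fun t => t.hy') ((M'.tr0.precomp _).comp tw) ty'
  have h₁ := PiPt.cellsOver_track1 hy (fun t => t.hy') (fun t => t.hυ)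
    ((M'.tr0.precomp _).comp tw) ty ty' (PiIn.computes_υ _)
  obtain ⟨c, hc, -, tc⟩ := exists_piCells hi' ti (hg.lift_between
    (H'.trans ts ts₁ ts' h₁.cells) ts ts'
    (fun t => EffObj.mem_hom_of_eq ((M.f0 t.w).sec_over _ _).symm ((M'.f0 t.w).sec_over _ _).symm
      t.hυ) (PiIn.computes_υ _))
  exact effHomotopic_iff_cells.2 ⟨c, hc, tc⟩

end PiUniversal

variable {X Y Z : EffObj} {f : Y ⟶ X} {g : Z ⟶ Y}

theorem piObj_isHPi (hf : EffFib f) (hg : EffFib g) {ε : pbObj (piProj hf hg) f hf ⟶ Z}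
    (hε₀ : ∀ p, ε.f0 p = p.val.1.sec p.val.2 p.prop.symm) (hε : ε ≫ g = pbSnd _ f hf) :
    IsHPi EffPS f g (piProj hf hg) (pbFst _ f hf) (pbSnd _ f hf) ε := by
  refine ⟨piProj_fib hf hg, pb_isPB _ f hf, hε, fun {A Ah} h v₁ v₂ hPB m hm => ?_,
    fun {A Ah} h v₁ v₂ hPB m hm M M' hM hM' => ?_⟩
  · obtain ⟨τ, ψ, -, hτ₂, hψ₁, hψ₂, -, hψτ⟩ := (pb_isPB h f hf).exists_inverse hPB
    obtain ⟨M, hMh, hMsec⟩ := exists_piTranspose hf hg h (τ ≫ m)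
      (by rw [Category.assoc, hm, hτ₂])
    refine ⟨M, hMh, fun fM hfM₁ hfM₂ => (fibHomotopic_iff hg _ _).2
      ⟨by rw [Category.assoc, hε, hfM₂, hm], .of_f0_eq fun ah => ?_⟩⟩
    have hψ : ψ.f0 ah = ⟨(v₁.f0 ah, v₂.f0 ah), EffHom.congr_f0 hPB.1 ah⟩ :=
      Subtype.ext (Prod.ext (EffHom.congr_f0 hψ₁ ah) (EffHom.congr_f0 hψ₂ ah))
    calc ε.f0 (fM.f0 ah) = (M.f0 (v₁.f0 ah)).sec (v₂.f0 ah)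
          ((EffHom.congr_f0 hPB.1 ah).symm.trans (EffHom.congr_f0 hMh _).symm) :=
          (hε₀ _).trans (PiPt.sec_congr (EffHom.congr_f0 hfM₁ ah) (EffHom.congr_f0 hfM₂ ah) _ _)
      _ = m.f0 (τ.f0 (ψ.f0 ah)) := by rw [hMsec, hψ]; rfl
      _ = m.f0 ah := congrArg m.f0 (EffHom.congr_f0 hψτ ah)
  · obtain ⟨τ, -, hτ₁, hτ₂, -, -, -, -⟩ := (pb_isPB h f hf).exists_inverse hPB
    -- both sections are homotopic to `m`, by goodness at the canonical comparison maps
    have hev : ∀ {N : A ⟶ piObj hf hg} (hN : HPiLiftGood EffPS f g (piProj hf hg) (pbFst _ f hf)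
        (pbSnd _ f hf) ε h v₁ v₂ m N), EffHomotopic (τ ≫ pbLift _ f hf (v₁ ≫ N) v₂
          (by rw [Category.assoc, hN.1, hPB.1]) ≫ ε) (τ ≫ m) := fun hN =>
      (((fibHomotopic_iff hg _ _).1 (hN.2 _ (pbLift_fst ..) (pbLift_snd ..))).2).whiskerLeft τ
    refine (fibHomotopic_iff (piProj_fib hf hg) M M').2 ⟨hM.1.trans hM'.1.symm,
      piHomotopic_of_sec hf hg (EffHom.congr_f0 hM.1) (EffHom.congr_f0 hM'.1) ?_⟩
    refine (effHomotopic_iff_cells.1 ((hev hM).trans (hev hM').symm)).congr (fun _ => rfl)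
      (fun p => ?_) (fun p => ?_)
    · exact (hε₀ _).trans (PiPt.sec_congr (congrArg M.f0 (EffHom.congr_f0 hτ₁ p))
        (EffHom.congr_f0 hτ₂ p) _ _)
    · exact (hε₀ _).trans (PiPt.sec_congr (congrArg M'.f0 (EffHom.congr_f0 hτ₁ p))
        (EffHom.congr_f0 hτ₂ p) _ _)

/-! ### Homotopy Π-types -/

section HPi

variable {X Y Z E F E' F' : EffObj} {f : Y ⟶ X} {g : Z ⟶ Y}
  {pE : E ⟶ X} {u₁ : F ⟶ E} {u₂ : F ⟶ Y} {ε : F ⟶ Z}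
  {pE' : E' ⟶ X} {u₁' : F' ⟶ E'} {u₂' : F' ⟶ Y} {ε' : F' ⟶ Z}

theorem IsHPi.liftGood_id (H : IsHPi EffPS f g pE u₁ u₂ ε) (hg : EffFib g) :
    HPiLiftGood EffPS f g pE u₁ u₂ ε pE u₁ u₂ ε (𝟙 E) := by
  refine ⟨Category.id_comp _, fun fM h₁ h₂ => ?_⟩
  obtain rfl : fM = 𝟙 F := H.pb.hom_ext (by simpa using h₁) (by simpa using h₂)
  exact (fibHomotopic_iff hg _ _).2 ⟨by simp, by simp⟩

theorem IsHPi.liftGood_comp (H : IsHPi EffPS f g pE u₁ u₂ ε) (H' : IsHPi EffPS f g pE' u₁' u₂' ε')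
    (hg : EffFib g) {M : E ⟶ E'} {M' : E' ⟶ E}
    (hM : HPiLiftGood EffPS f g pE' u₁' u₂' ε' pE u₁ u₂ ε M)
    (hM' : HPiLiftGood EffPS f g pE u₁ u₂ ε pE' u₁' u₂' ε' M') :
    HPiLiftGood EffPS f g pE u₁ u₂ ε pE u₁ u₂ ε (M ≫ M') := by
  refine ⟨by rw [Category.assoc, hM'.1, hM.1], fun fM h₁ h₂ => ?_⟩
  obtain ⟨k, ⟨hk₁, hk₂⟩, -⟩ := H'.pb.2 F (u₁ ≫ M) u₂ (by rw [Category.assoc, hM.1, H.pb.1])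
  obtain ⟨l, ⟨hl₁, hl₂⟩, -⟩ := H.pb.2 F' (u₁' ≫ M') u₂' (by rw [Category.assoc, hM'.1, H'.pb.1])
  have hfM : fM = k ≫ l := H.pb.hom_ext
    (by rw [h₁, Category.assoc, hl₁, ← Category.assoc k, hk₁, Category.assoc])
    (by rw [h₂, Category.assoc, hl₂, hk₂])
  obtain ⟨hb₁, hh₁⟩ := (fibHomotopic_iff hg _ _).1 (hM.2 k hk₁ hk₂)
  obtain ⟨hb₂, hh₂⟩ := (fibHomotopic_iff hg _ _).1 (hM'.2 l hl₁ hl₂)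
  refine (fibHomotopic_iff hg _ _).2 ⟨?_, ?_⟩
  · rw [hfM, Category.assoc, Category.assoc, ← Category.assoc l, hb₂, ← Category.assoc, hb₁]
  · rw [hfM, Category.assoc]
    exact (hh₂.whiskerLeft k).trans hh₁

theorem IsHPi.exists_eqv (H : IsHPi EffPS f g pE u₁ u₂ ε) (H' : IsHPi EffPS f g pE' u₁' u₂' ε')
    (hg : EffFib g) : ∃ M : E ⟶ E', M ≫ pE' = pE ∧ EffEqv M := by
  obtain ⟨M, hM⟩ := H'.lift pE u₁ u₂ H.pb ε H.over'
  obtain ⟨M', hM'⟩ := H.lift pE' u₁' u₂' H'.pb ε' H'.over'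
  have h₁ := H.unique pE u₁ u₂ H.pb ε H.over' _ _ (H.liftGood_comp H' hg hM hM') (H.liftGood_id hg)
  have h₂ := H'.unique pE' u₁' u₂' H'.pb ε' H'.over' _ _ (H'.liftGood_comp H hg hM' hM)
    (H'.liftGood_id hg)
  exact ⟨M, hM.1, M', ((fibHomotopic_iff H.fib _ _).1 h₁).2,
    ((fibHomotopic_iff H'.fib _ _).1 h₂).2⟩

end HPi

/-- The counit is corrected through a homotopy inverse of `v`. -/
theorem IsHPi.of_eqv_comp {X Y Z Z₁ E F : EffObj} {f : Y ⟶ X} {g : Z ⟶ Y} {v : Z ⟶ Z₁}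
    {t : Z₁ ⟶ Y} {pE : E ⟶ X} {u₁ : F ⟶ E} {u₂ : F ⟶ Y} {ε : F ⟶ Z₁}
    (H : IsHPi EffPS f t pE u₁ u₂ ε) (ht : EffFib t) (hg : EffFib g) (hv : EffEqv v)
    (hvt : v ≫ t = g) : ∃ ε' : F ⟶ Z, IsHPi EffPS f g pE u₁ u₂ ε' := by
  obtain ⟨v', hvv', hv'v⟩ := hv
  have hε : (ε ≫ v') ≫ g ≃ₕ u₂ := by
    rw [← H.over', ← hvt]
    simpa using (hv'v.whiskerRight t).whiskerLeft ε
  obtain ⟨ε', hε'g, hε'⟩ := hg.strictify _ _ hε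
  refine ⟨ε', H.fib, H.pb, hε'g, fun h v₁ v₂ hPB m hm => ?_,
    fun h v₁ v₂ hPB m hm M M' hM hM' => ?_⟩
  · obtain ⟨M, hMh, hM⟩ := H.lift h v₁ v₂ hPB (m ≫ v) (by rw [Category.assoc, hvt, hm])
    refine ⟨M, hMh, fun fM h₁ h₂ => (fibHomotopic_iff hg _ _).2
      ⟨by rw [Category.assoc, hε'g, h₂, hm], ?_⟩⟩
    calc fM ≫ ε' ≃ₕ fM ≫ ε ≫ v' := (hε'.whiskerLeft fM).symm
      _ ≃ₕ (m ≫ v) ≫ v' := by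
        simpa using (((fibHomotopic_iff ht _ _).1 (hM fM h₁ h₂)).2).whiskerRight v'
      _ ≃ₕ m := by simpa using hvv'.whiskerLeft m
  · -- good lifts of `m` for the corrected counit are good lifts of `m ≫ v` for `ε`
    have good : ∀ {N : _ ⟶ E}, HPiLiftGood EffPS f g pE u₁ u₂ ε' h v₁ v₂ m N →
        HPiLiftGood EffPS f t pE u₁ u₂ ε h v₁ v₂ (m ≫ v) N := fun hN =>
      ⟨hN.1, fun fM h₁ h₂ => (fibHomotopic_iff ht _ _).2 ⟨by
        rw [Category.assoc, H.over', h₂, Category.assoc, hvt, hm], calc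
          fM ≫ ε ≃ₕ fM ≫ ε ≫ v' ≫ v := by simpa using (hv'v.whiskerLeft (fM ≫ ε)).symm
          _ ≃ₕ fM ≫ ε' ≫ v := by simpa using (hε'.whiskerLeft fM).whiskerRight v
          _ ≃ₕ m ≫ v := by
            simpa using (((fibHomotopic_iff hg _ _).1 (hN.2 fM h₁ h₂)).2).whiskerRight v⟩⟩
    exact H.unique h v₁ v₂ hPB (m ≫ v) (by rw [Category.assoc, hvt, hm]) M M' (good hM) (good hM')

theorem EffDisc.closedUnderHPi : ClosedUnderHPi EffPS (fun {_ _} f => EffDisc f) := by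
  intro Y X Z f g hf hgd E F pE u₁ u₂ ε hE
  obtain ⟨hg, Z₁, v, t, hv, ht, hvt⟩ := hgd
  obtain ⟨ε₀, hε₀, hε₀t⟩ := exists_piEps hf ht.1
  obtain ⟨ε₁, hPi⟩ := (piObj_isHPi hf ht.1 hε₀ hε₀t).of_eqv_comp ht.1 hg hv hvt
  obtain ⟨M, hM, hMeqv⟩ := hE.exists_eqv hPi hg
  exact ⟨hE.fib, _, M, _, hMeqv, piProj_stdDisc hf ht, hM⟩

/-- In the path category `EFF`, the discrete fibrations form an
impredicative class of small fibrations: (1) every isomorphism is a discrete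
fibration; (2) discrete fibrations are stable under homotopy pullback; (3) discrete
fibrations are closed under composition; (4) discrete fibrations are closed under
`Π_f` for every (not necessarily discrete) fibration `f`. -/
theorem EFF_discrete_impredicative_class :
    (∀ {X Y : EffObj} (f : X ⟶ Y), CategoryTheory.IsIso f → EffDisc f) ∧
    (∀ {D Cc B A : EffObj} (g : D ⟶ Cc) (top : D ⟶ B) (f : B ⟶ A) (bot : Cc ⟶ A),
      EffFib g → EffFib f → EffDisc f → IsHomotopyPB EffPS g top f bot → EffDisc g) ∧
    (∀ {X Y Z : EffObj} (f : X ⟶ Y) (g : Y ⟶ Z), EffDisc f → EffDisc g → EffDisc (f ≫ g)) ∧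
    (ClosedUnderHPi EffPS (fun {_ _} f => EffDisc f)) :=
  ⟨fun f _ => .of_isIso f, fun _ _ _ _ hg _ hfd H => .of_isHomotopyPB hg hfd H,
    fun _ _ hf hg => hf.comp hg, EffDisc.closedUnderHPi⟩

end EffPaper
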